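/- arXiv:0803.1477 — 6 statements merged into one kernel-verified Lean document; each statement's English description precedes it below -/
import Mathlib

section
/- Let R be a commutative ring and let r, s ∈ R. For x ∈ R and k ∈ ℕ write x^{↓k} = ∏_{j=0}^{k-1} (x - j) for the falling factorial. Then for every integer m ≥ 1: Σ_{ω ∈ Π_m} r^{↓|ω|} · ∏_{B ∈ ω} s^{↓|B|} = (r·s)^{↓m}, where the sum runs over all partitions ω of the set {1,…,m} into nonempty blocks, |ω| is the number of blocks of ω, and |B| is the size of a block B. -/
/-!
Every partition of `insert a t` (with `a ∉ t`) arises exactly once from a partition `ω` of `t`,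
either by adding the part `{a}`, which multiplies the weight `r^{↓|ω|} ∏ s^{↓|B|}` by
`(r - |ω|) s`, or by putting `a` into a part `B`, which multiplies it by `s - |B|`. As the sizes of
the parts add up to `|t|`, these factors sum to `r s - |t|`, which is exactly the recursion
`(r s)^{↓(|t| + 1)} = (r s)^{↓|t|} (r s - |t|)`.
-/

open Finset

/-- The falling factorial `x^{↓k} = x(x-1)⋯(x-k+1)` in a commutative ring. -/
def fallingFactorial {R : Type*} [CommRing R] (x : R) (k : ℕ) : R :=
  ∏ j ∈ Finset.range k, (x - (j : R))

section FallingFactorial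

variable {R : Type*} [CommRing R]

lemma fallingFactorial_zero (x : R) : fallingFactorial x 0 = 1 :=
  prod_range_zero _

lemma fallingFactorial_succ (x : R) (k : ℕ) :
    fallingFactorial x (k + 1) = fallingFactorial x k * (x - k) :=
  prod_range_succ _ _

lemma fallingFactorial_one (x : R) : fallingFactorial x 1 = x := by
  simp [fallingFactorial]

end FallingFactorial

namespace Finpartition

variable {α : Type*} [DecidableEq α] {s : Finset α} {a : α}

lemma disjoint_of_mem_insert_empty_parts (P : Finpartition s) {X B : Finset α}
    (hX : X ∈ insert ∅ P.parts) (hB : B ∈ P.parts) (hXB : X ≠ B) : Disjoint X B := by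
  rcases mem_insert.1 hX with rfl | hX
  · exact disjoint_empty_left B
  · exact P.disjoint hX hB hXB

lemma subset_of_mem_insert_empty_parts (P : Finpartition s) {X : Finset α}
    (hX : X ∈ insert ∅ P.parts) : X ⊆ s := by
  rcases mem_insert.1 hX with rfl | hX
  · exact empty_subset s
  · exact P.le hX

lemma union_sup_erase_parts (P : Finpartition s) {X : Finset α} (hX : X ⊆ s) :
    X ∪ (P.parts.erase X).sup id = s := by
  have hparts : insert X (P.parts.erase X) = insert X P.parts := by
    ext Y; by_cases h : Y = X <;> simp [h]
  calc X ∪ (P.parts.erase X).sup id = (insert X (P.parts.erase X)).sup id := sup_insert.symm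
    _ = s := by rw [hparts, sup_insert, P.sup_parts]; exact union_eq_right.2 hX

/-- `X = ∅` stands for adding `a` as a new singleton part. -/
def insertAt (P : Finpartition s) (ha : a ∉ s) {X : Finset α} (hX : X ∈ insert ∅ P.parts) :
    Finpartition (insert a s) where
  parts := insert (insert a X) (P.parts.erase X)
  supIndep := by
    rw [supIndep_iff_pairwiseDisjoint, coe_insert]
    refine (P.disjoint.subset (coe_subset.2 (erase_subset X _))).insert fun B hB _ => ?_
    obtain ⟨hBX, hB⟩ := mem_erase.1 hB
    exact disjoint_insert_left.2
      ⟨fun h => ha (P.le hB h), P.disjoint_of_mem_insert_empty_parts hX hB hBX.symm⟩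
  sup_parts := by
    rw [sup_insert, id, sup_eq_union, insert_union,
      P.union_sup_erase_parts (P.subset_of_mem_insert_empty_parts hX)]
  bot_notMem := by
    simp only [bot_eq_empty, mem_insert, mem_erase, not_or]
    exact ⟨(insert_ne_empty a X).symm, fun h => P.bot_notMem h.2⟩

lemma parts_insertAt (P : Finpartition s) (ha : a ∉ s) {X : Finset α}
    (hX : X ∈ insert ∅ P.parts) :
    (P.insertAt ha hX).parts = insert (insert a X) (P.parts.erase X) := rfl

lemma parts_restrict_insert (P : Finpartition (insert a s)) :
    (P.restrict (subset_insert a s)).parts = (P.parts.image (· ∩ s)).erase ∅ := rfl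

lemma part_insertAt (P : Finpartition s) (ha : a ∉ s) {X : Finset α}
    (hX : X ∈ insert ∅ P.parts) : (P.insertAt ha hX).part a = insert a X :=
  part_eq_of_mem _ (mem_insert_self _ _) (mem_insert_self a X)

lemma restrict_insertAt (P : Finpartition s) (ha : a ∉ s) {X : Finset α}
    (hX : X ∈ insert ∅ P.parts) : (P.insertAt ha hX).restrict (subset_insert a s) = P := by
  have hXs : insert a X ∩ s = X := by
    rw [insert_inter_of_notMem ha, inter_eq_left.2 (P.subset_of_mem_insert_empty_parts hX)]
  have hrest : (P.parts.erase X).image (· ∩ s) = P.parts.erase X := by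
    rw [image_congr fun B hB => inter_eq_left.2 (P.le (mem_of_mem_erase hB)), image_id']
  ext1
  rw [parts_restrict_insert, parts_insertAt, image_insert, hXs, hrest]
  rcases mem_insert.1 hX with rfl | hX
  · rw [erase_eq_of_notMem P.empty_notMem_parts, erase_insert P.empty_notMem_parts]
  · rw [insert_erase hX, erase_eq_of_notMem P.empty_notMem_parts]

lemma part_inter_mem_insert_empty_parts_restrict (P : Finpartition (insert a s)) :
    P.part a ∩ s ∈ insert ∅ (P.restrict (subset_insert a s)).parts := by
  by_cases h : P.part a ∩ s = ∅
  · exact h ▸ mem_insert_self _ _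
  · exact mem_insert_of_mem
      (mem_erase.2 ⟨h, mem_image_of_mem _ (P.part_mem.2 (mem_insert_self a s))⟩)

lemma inter_eq_self_of_ne_part (P : Finpartition (insert a s)) {B : Finset α} (hB : B ∈ P.parts)
    (hBa : B ≠ P.part a) : B ∩ s = B := by
  have haB : a ∉ B := fun h => hBa (P.part_eq_of_mem hB h).symm
  exact inter_eq_left.2 ((subset_insert_iff_of_notMem haB).1 (P.le hB))

lemma insertAt_restrict (P : Finpartition (insert a s)) (ha : a ∉ s) :
    (P.restrict (subset_insert a s)).insertAt ha P.part_inter_mem_insert_empty_parts_restrict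
      = P := by
  have hQ : P.part a ∈ P.parts := P.part_mem.2 (mem_insert_self a s)
  have haQ : a ∈ P.part a := P.mem_part_self.2 (mem_insert_self a s)
  have hinsert : insert a (P.part a ∩ s) = P.part a := by
    rw [insert_inter_distrib, insert_eq_of_mem haQ, inter_eq_left.2 (P.part_subset a)]
  have hrest :
      ((P.parts.image (· ∩ s)).erase ∅).erase (P.part a ∩ s) = P.parts.erase (P.part a) := by
    ext Y
    simp only [mem_erase, mem_image]
    constructor
    · rintro ⟨hYQ, hY, B, hB, rfl⟩
      have hBQ : B ≠ P.part a := fun h => hYQ (h ▸ rfl)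
      rw [P.inter_eq_self_of_ne_part hB hBQ]
      exact ⟨hBQ, hB⟩
    · rintro ⟨hYQ, hY⟩
      have hYs := P.inter_eq_self_of_ne_part hY hYQ
      refine ⟨fun h => ?_, P.ne_empty hY, Y, hY, hYs⟩
      obtain ⟨y, hy⟩ := P.nonempty_of_mem_parts hY
      exact disjoint_left.1 (P.disjoint hY hQ hYQ) hy (mem_of_mem_inter_left (h ▸ hy))
  ext1
  rw [parts_insertAt, hinsert, parts_restrict_insert, hrest, insert_erase hQ]

end Finpartition

section Weight

variable {R : Type*} [CommRing R] {α : Type*} [DecidableEq α] {t : Finset α}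

def partitionWeight (r s : R) (P : Finpartition t) : R :=
  fallingFactorial r #P.parts * ∏ B ∈ P.parts, fallingFactorial s #B

def insertionFactor (r s : R) (P : Finpartition t) (X : Finset α) : R :=
  if X = ∅ then (r - #P.parts) * s else s - #X

lemma partitionWeight_insertAt (r s : R) (P : Finpartition t) {a : α} (ha : a ∉ t)
    {X : Finset α} (hX : X ∈ insert ∅ P.parts) :
    partitionWeight r s (P.insertAt ha hX) = insertionFactor r s P X * partitionWeight r s P := by
  have hnew : insert a X ∉ P.parts.erase X := fun h =>
    ha (P.le (mem_of_mem_erase h) (mem_insert_self a X))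
  simp only [partitionWeight, insertionFactor, P.parts_insertAt, card_insert_of_notMem hnew,
    prod_insert hnew]
  rcases mem_insert.1 hX with rfl | hX
  · rw [erase_eq_of_notMem P.empty_notMem_parts, if_pos rfl, insert_empty, card_singleton,
      fallingFactorial_one, fallingFactorial_succ]
    ring
  · have haX : a ∉ X := fun h => ha (P.le hX h)
    rw [if_neg (P.ne_empty hX), card_erase_add_one hX, card_insert_of_notMem haX,
      fallingFactorial_succ, ← mul_prod_erase _ _ hX]
    ring

lemma sum_insertionFactor (r s : R) (P : Finpartition t) :
    ∑ X ∈ insert ∅ P.parts, insertionFactor r s P X = r * s - #t := by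
  simp only [insertionFactor]
  rw [sum_insert P.empty_notMem_parts, if_pos rfl,
    sum_congr rfl fun X hX => if_neg (P.ne_empty hX), sum_sub_distrib, sum_const, nsmul_eq_mul,
    ← Nat.cast_sum, P.sum_card_parts]
  ring

theorem sum_partitionWeight (r s : R) (t : Finset α) :
    ∑ P : Finpartition t, partitionWeight r s P = fallingFactorial (r * s) #t := by
  induction t using Finset.induction_on with
  | empty =>
    have : Unique (Finpartition (∅ : Finset α)) :=
      inferInstanceAs (Unique (Finpartition (⊥ : Finset α)))
    rw [Fintype.sum_unique, partitionWeight, Finpartition.parts_eq_empty_iff.2 rfl, card_empty,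
      prod_empty, fallingFactorial_zero, one_mul, card_empty, fallingFactorial_zero]
  | insert a t ha ih =>
    have hbij : ∑ P : Finpartition (insert a t), partitionWeight r s P
        = ∑ p ∈ univ.sigma fun P : Finpartition t => insert ∅ P.parts,
            insertionFactor r s p.1 p.2 * partitionWeight r s p.1 := by
      refine (sum_bij' (fun p hp => p.1.insertAt ha (mem_sigma.1 hp).2)
        (fun P _ => ⟨P.restrict (subset_insert a t), P.part a ∩ t⟩) (fun _ _ => mem_univ _)
        (fun P _ => mem_sigma.2 ⟨mem_univ _, P.part_inter_mem_insert_empty_parts_restrict⟩)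
        ?_ ?_ ?_).symm
      · rintro ⟨P, X⟩ hp
        refine Sigma.ext (P.restrict_insertAt ha _) (heq_of_eq ?_)
        rw [P.part_insertAt, insert_inter_of_notMem ha,
          inter_eq_left.2 (P.subset_of_mem_insert_empty_parts (mem_sigma.1 hp).2)]
      · intro P _
        exact P.insertAt_restrict ha
      · rintro ⟨P, X⟩ _
        exact (partitionWeight_insertAt r s P ha _).symm
    rw [hbij, sum_sigma]
    simp_rw [← sum_mul, sum_insertionFactor, ← mul_sum, ih, card_insert_of_notMem ha,
      fallingFactorial_succ]
    ring

end Weight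

theorem stmt3_general {R : Type*} [CommRing R] (r s : R) (m : ℕ) :
    ∑ ω : Finpartition (Finset.univ : Finset (Fin m)),
        fallingFactorial r ω.parts.card * ∏ B ∈ ω.parts, fallingFactorial s B.card
      = fallingFactorial (r * s) m := by
  simpa [partitionWeight] using sum_partitionWeight r s (univ : Finset (Fin m))

theorem stmt3 {R : Type*} [CommRing R] (r s : R) (m : ℕ) (hm : 1 ≤ m) :
    ∑ ω : Finpartition (Finset.univ : Finset (Fin m)),
        fallingFactorial r ω.parts.card * ∏ B ∈ ω.parts, fallingFactorial s B.card
      = fallingFactorial (r * s) m :=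
  stmt3_general r s m
end

section
/- Let S be a finite set and let R be a commutative ring. For q1, q2 ∈ R and partitions σ, π of S, define μ_{q1,q2}(σ,π) ∈ R as follows: if σ refines π (every block of σ is contained in a block of π), and π has blocks B_1,…,B_k where block B_i contains exactly λ_i blocks of σ, set μ_{q1,q2}(σ,π) = ∏_{i=1}^{k} ∏_{j=1}^{λ_i - 1} (q2 - j·q1); otherwise set μ_{q1,q2}(σ,π) = 0. Then for all q1, q2, q3 ∈ R and all partitions σ, π of S: Σ_{τ ∈ Π(S)} μ_{q1,q2}(σ,τ) · μ_{q2,q3}(τ,π) = μ_{q1,q3}(σ,π). -/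
open Finset
open scoped Classical

/-- `σ` refines `π`: every block of `σ` is contained in some block of `π`. -/
def Refines {S : Type*} [DecidableEq S] {s : Finset S}
    (σ π : Finpartition s) : Prop :=
  ∀ B ∈ σ.parts, ∃ C ∈ π.parts, B ⊆ C

/-- The generalized Möbius function `μ_{q1,q2}(σ,π)`:
if `σ ≤ π`, the product over blocks `C` of `π` of `∏_{j=1}^{λ_C - 1} (q2 - j·q1)`,
where `λ_C` is the number of blocks of `σ` contained in `C`; and `0` otherwise. -/
noncomputable def muQ {S : Type*} [DecidableEq S] {s : Finset S} {R : Type*} [CommRing R]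
    (q1 q2 : R) (σ π : Finpartition s) : R :=
  if Refines σ π then
    ∏ C ∈ π.parts, ∏ j ∈ Finset.Icc 1 ((σ.parts.filter (fun B => B ⊆ C)).card - 1),
      (q2 - (j : R) * q1)
  else 0

/-!
Both sides factor over the parts of `π`. A partition `τ` with `σ ≤ τ ≤ π` amounts to choosing,
for every part `C` of `π`, a partition of the set of parts of `σ` inside `C`
(`Finpartition.intervalEquiv`), and `μ_{q1,q2}(σ,τ) μ_{q2,q3}(τ,π)` is the product of the
corresponding weights. This reduces the identity to the interval `[⊥, ⊤]` of the partition lattice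
of an `n`-element set, where it reads `∑_ρ ∏_{P ∈ ρ} φ_{q1,q2}(|P|) · φ_{q2,q3}(|ρ|) = φ_{q1,q3}(n)`
with `φ_{a,b}(m) = ∏_{j=1}^{m-1} (b - j a)`. That is proved by induction on `n`: a partition of an
`(n+1)`-element set comes from a partition `ρ` with `k` parts of the first `n` elements, by adding
the new element either as a singleton, which multiplies the weight by `q3 - k q2`, or to a part
`P`, which multiplies it by `q2 - |P| q1`; these factors add up to `q3 - n q1`.
-/

section MuBlock

variable {R : Type*} [CommRing R]

/-- `μ_{q1,q2}(⊥, ⊤)` in the partition lattice of an `m`-element set. -/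
def muBlock (q1 q2 : R) (m : ℕ) : R :=
  ∏ j ∈ Icc 1 (m - 1), (q2 - (j : R) * q1)

@[simp] lemma muBlock_zero (q1 q2 : R) : muBlock q1 q2 0 = 1 := by simp [muBlock]

@[simp] lemma muBlock_one (q1 q2 : R) : muBlock q1 q2 1 = 1 := by simp [muBlock]

lemma muBlock_succ (q1 q2 : R) {m : ℕ} (hm : m ≠ 0) :
    muBlock q1 q2 (m + 1) = muBlock q1 q2 m * (q2 - m * q1) := by
  obtain ⟨n, rfl⟩ := Nat.exists_eq_succ_of_ne_zero hm
  simp only [muBlock, Nat.succ_sub_one]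
  rw [prod_Icc_succ_top (by omega)]

end MuBlock

namespace Finpartition

variable {α : Type*} [DecidableEq α] {s u : Finset α} {a : α}

section InsertElem

lemma notMem_of_mem_parts (ha : a ∉ s) {τ : Finpartition s} {C : Finset α} (hC : C ∈ τ.parts) :
    a ∉ C := fun haC => ha (τ.le hC haC)

def insertIntoPart (ha : a ∉ s) (τ : Finpartition s) {B : Finset α} (hB : B ∈ τ.parts) :
    Finpartition (insert a s) :=
  ofExistsUnique (insert (insert a B) (τ.parts.erase B))
    (by
      simp only [mem_insert, mem_erase, forall_eq_or_imp]
      exact ⟨insert_subset_insert _ (τ.le hB), fun C ⟨_, hC⟩ => (τ.le hC).trans (subset_insert _ _)⟩)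
    (by
      intro x hx
      by_cases hxB : x = a ∨ x ∈ B
      · refine ⟨insert a B, by simpa using hxB, fun C ⟨hC, hxC⟩ => ?_⟩
        rcases mem_insert.1 hC with rfl | hC
        · rfl
        · have := notMem_of_mem_parts ha (mem_of_mem_erase hC)
          have := τ.eq_of_mem_parts (a := x) (mem_of_mem_erase hC) hB
          grind
      · obtain ⟨C, ⟨hC, hxC⟩, huniq⟩ :=
          τ.existsUnique_mem ((mem_insert.1 hx).resolve_left (by tauto))
        refine ⟨C, ⟨?_, hxC⟩, ?_⟩ <;> grind)
    (by simp [τ.empty_notMem_parts, (insert_nonempty a B).ne_empty.symm])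

/-- `none` adds `{a}` as a new part, `some B` adds `a` to the part `B`. -/
def insertElem (ha : a ∉ s) : (Σ τ : Finpartition s, Option τ.parts) → Finpartition (insert a s)
  | ⟨τ, none⟩ => τ.extend (b := {a}) (singleton_ne_empty a) (disjoint_singleton_right.2 ha)
      (by rw [sup_eq_union, union_comm, ← insert_eq])
  | ⟨τ, some B⟩ => τ.insertIntoPart ha B.2

def eraseElem (ha : a ∉ s) (τ : Finpartition (insert a s)) : Finpartition s :=
  (τ.avoid {a}).copy (by rw [sdiff_singleton_eq_erase, erase_insert ha])

lemma eraseElem_parts (ha : a ∉ s) (τ : Finpartition (insert a s)) :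
    (eraseElem ha τ).parts = (τ.parts.image (· \ {a})).erase ∅ := rfl

lemma image_sdiff_singleton_of_subset_parts (ha : a ∉ s) {τ : Finpartition s}
    {P : Finset (Finset α)} (hP : P ⊆ τ.parts) : P.image (· \ {a}) = P := by
  conv_rhs => rw [← image_id (s := P)]
  exact image_congr fun C hC => by
    rw [id, sdiff_singleton_eq_erase, erase_eq_of_notMem (notMem_of_mem_parts ha (hP hC))]

lemma image_sdiff_singleton_parts (τ : Finpartition u) (hau : a ∈ u) :
    τ.parts.image (· \ {a}) = insert (τ.part a \ {a}) (τ.parts.erase (τ.part a)) := by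
  conv_lhs => rw [← insert_erase (τ.part_mem.2 hau)]
  rw [image_insert]
  congr 1
  conv_rhs => rw [← image_id (s := τ.parts.erase _)]
  refine image_congr fun C hC => ?_
  have haC : a ∉ C := fun haC => (mem_erase.1 hC).1 (τ.part_eq_of_mem (mem_erase.1 hC).2 haC).symm
  rw [id, sdiff_singleton_eq_erase, erase_eq_of_notMem haC]

@[simp] lemma eraseElem_insertElem (ha : a ∉ s) (x : Σ τ : Finpartition s, Option τ.parts) :
    eraseElem ha (insertElem ha x) = x.1 := by
  obtain ⟨τ, _ | ⟨B, hB⟩⟩ := x <;> ext1 <;> rw [eraseElem_parts]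
  · simp [insertElem, image_sdiff_singleton_of_subset_parts ha subset_rfl, τ.empty_notMem_parts]
  · rw [insertElem, insertIntoPart, ofExistsUnique_parts, image_insert,
      image_sdiff_singleton_of_subset_parts ha (erase_subset B τ.parts), sdiff_singleton_eq_erase,
      erase_insert (notMem_of_mem_parts ha hB), insert_erase hB,
      erase_eq_of_notMem τ.empty_notMem_parts]

lemma erase_part_insertElem (ha : a ∉ s) (τ : Finpartition s) (o : Option τ.parts) :
    ((insertElem ha ⟨τ, o⟩).part a).erase a = (o.map Subtype.val).getD ∅ := by
  obtain _ | ⟨B, hB⟩ := o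
  · rw [part_eq_of_mem _ (by simp [insertElem]) (mem_singleton_self a)]
    simp
  · rw [part_eq_of_mem _ (by simp [insertElem, insertIntoPart]) (mem_insert_self a B)]
    simp [erase_insert (notMem_of_mem_parts ha hB)]

lemma insertElem_injective (ha : a ∉ s) : Function.Injective (insertElem ha) := by
  rintro ⟨τ, o⟩ ⟨τ', o'⟩ h
  obtain rfl : τ = τ' := by simpa using congrArg (eraseElem ha) h
  have hpart := (erase_part_insertElem ha τ o).symm.trans
    ((congrArg (fun τ => (τ.part a).erase a) h).trans (erase_part_insertElem ha τ o'))
  obtain _ | ⟨B, hB⟩ := o <;> obtain _ | ⟨B', hB'⟩ := o'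
  · rfl
  · exact absurd hpart.symm (τ.ne_empty hB')
  · exact absurd hpart (τ.ne_empty hB)
  · simp_all

lemma insertElem_surjective (ha : a ∉ s) : Function.Surjective (insertElem ha) := by
  intro τ
  have has : a ∈ insert a s := mem_insert_self a s
  have hD : τ.part a ∈ τ.parts := τ.part_mem.2 has
  have hparts := eraseElem_parts ha τ
  rw [image_sdiff_singleton_parts τ has] at hparts
  by_cases hsing : τ.part a \ {a} = ∅
  · refine ⟨⟨eraseElem ha τ, none⟩, Finpartition.ext ?_⟩
    have hDa : τ.part a = {a} :=
      (subset_singleton_iff.1 (sdiff_eq_empty_iff_subset.1 hsing)).resolve_left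
        (ne_empty_of_mem (τ.mem_part_self.2 has))
    rw [hsing, erase_insert (fun h => τ.empty_notMem_parts (mem_erase.1 h).2)] at hparts
    simp [insertElem, hparts, ← hDa, insert_erase hD]
  · have hnew : τ.part a \ {a} ∉ τ.parts.erase (τ.part a) := fun h => by
      obtain ⟨x, hx⟩ := nonempty_iff_ne_empty.2 hsing
      exact (mem_erase.1 h).1 (τ.eq_of_mem_parts (mem_erase.1 h).2 hD hx (sdiff_subset hx))
    rw [erase_eq_of_notMem (by simp [Ne.symm hsing, τ.empty_notMem_parts])] at hparts
    have hB : τ.part a \ {a} ∈ (eraseElem ha τ).parts := hparts ▸ mem_insert_self _ _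
    refine ⟨⟨eraseElem ha τ, some ⟨_, hB⟩⟩, Finpartition.ext ?_⟩
    simp only [insertElem, insertIntoPart, ofExistsUnique_parts]
    rw [hparts, erase_insert hnew, sdiff_singleton_eq_erase, insert_erase (τ.mem_part_self.2 has),
      insert_erase hD]

end InsertElem

section MuChain

variable {R : Type*} [CommRing R]

/-- `μ_{q1,q2}(⊥, ρ) · μ_{q2,q3}(ρ, ⊤)`. -/
def muChain (q1 q2 q3 : R) (ρ : Finpartition s) : R :=
  (∏ P ∈ ρ.parts, muBlock q1 q2 #P) * muBlock q2 q3 #ρ.parts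

lemma muChain_insertElem_none (q1 q2 q3 : R) (ha : a ∉ s) {τ : Finpartition s}
    (hτ : τ.parts.Nonempty) :
    muChain q1 q2 q3 (insertElem ha ⟨τ, none⟩) = muChain q1 q2 q3 τ * (q3 - #τ.parts * q2) := by
  have hnew : {a} ∉ τ.parts := fun h => notMem_of_mem_parts ha h (mem_singleton_self a)
  simp only [muChain, insertElem, extend_parts, prod_insert hnew, card_insert_of_notMem hnew,
    card_singleton, muBlock_one, one_mul, muBlock_succ q2 q3 hτ.card_pos.ne']
  ring

lemma muChain_insertElem_some (q1 q2 q3 : R) (ha : a ∉ s) {τ : Finpartition s} (B : τ.parts) :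
    muChain q1 q2 q3 (insertElem ha ⟨τ, some B⟩) = muChain q1 q2 q3 τ * (q2 - #B.1 * q1) := by
  obtain ⟨B, hB⟩ := B
  have hnew : insert a B ∉ τ.parts.erase B := fun h =>
    notMem_of_mem_parts ha (mem_of_mem_erase h) (mem_insert_self a B)
  simp only [muChain, insertElem, insertIntoPart, ofExistsUnique_parts, prod_insert hnew,
    card_insert_of_notMem hnew, card_erase_of_mem hB,
    card_insert_of_notMem (notMem_of_mem_parts ha hB),
    muBlock_succ q1 q2 (τ.nonempty_of_mem_parts hB).card_pos.ne',
    Nat.sub_add_cancel (card_pos.2 ⟨B, hB⟩)]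
  rw [← mul_prod_erase _ _ hB]
  ring

lemma sum_muChain_insertElem (q1 q2 q3 : R) (ha : a ∉ s) (hs : s.Nonempty) (τ : Finpartition s) :
    ∑ o, muChain q1 q2 q3 (insertElem ha ⟨τ, o⟩) = muChain q1 q2 q3 τ * (q3 - #s * q1) := by
  have hsum : ∑ B ∈ τ.parts, (q2 - #B * q1) = #τ.parts * q2 - #s * q1 := by
    rw [sum_sub_distrib, sum_const, nsmul_eq_mul, ← sum_mul, ← Nat.cast_sum, τ.sum_card_parts]
  rw [Fintype.sum_option, muChain_insertElem_none _ _ _ ha (τ.parts_nonempty hs.ne_empty)]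
  simp only [muChain_insertElem_some, ← mul_sum, sum_coe_sort τ.parts (fun B => q2 - #B * q1),
    hsum]
  ring

theorem sum_muChain (q1 q2 q3 : R) (t : Finset α) :
    ∑ ρ : Finpartition t, muChain q1 q2 q3 ρ = muBlock q1 q3 #t := by
  induction t using Finset.induction_on with
  | empty =>
    rw [show (∅ : Finset α) = ⊥ from rfl, Fintype.sum_unique]
    exact (by simp [muChain] : muChain q1 q2 q3 (Finpartition.empty (Finset α)) = 1)
  | @insert a s ha ih =>
    rcases s.eq_empty_or_nonempty with rfl | hs
    · let := (isAtom_singleton a).uniqueFinpartition (P := ⊥)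
      rw [insert_empty_eq, Fintype.sum_subsingleton _ ⊥]
      simp [muChain]
    · rw [← Fintype.sum_bijective _ ⟨insertElem_injective ha, insertElem_surjective ha⟩ _ _
        fun _ => rfl, ← univ_sigma_univ, sum_sigma]
      simp only [sum_muChain_insertElem q1 q2 q3 ha hs, ← sum_mul, ih, card_insert_of_notMem ha,
        muBlock_succ q1 q3 hs.card_pos.ne']

end MuChain

section Interval

def partsWithin (σ : Finpartition u) (C : Finset α) : Finset (Finset α) :=
  σ.parts.filter (· ⊆ C)

lemma mem_partsWithin {σ : Finpartition u} {B C : Finset α} :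
    B ∈ σ.partsWithin C ↔ B ∈ σ.parts ∧ B ⊆ C := mem_filter

lemma eq_of_subset_of_subset_parts {π : Finpartition u} {B C C' : Finset α} (hB : B.Nonempty)
    (hC : C ∈ π.parts) (hC' : C' ∈ π.parts) (hBC : B ⊆ C) (hBC' : B ⊆ C') : C = C' := by
  obtain ⟨x, hx⟩ := hB
  exact π.eq_of_mem_parts hC hC' (hBC hx) (hBC' hx)

lemma sup_partsWithin {σ τ : Finpartition u} (h : σ ≤ τ) {D : Finset α} (hD : D ∈ τ.parts) :
    (σ.partsWithin D).sup id = D := by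
  refine le_antisymm (Finset.sup_le fun B hB => (mem_partsWithin.1 hB).2) fun x hx => ?_
  obtain ⟨B, hB, hxB⟩ := σ.exists_mem (τ.le hD hx)
  obtain ⟨D', hD', hBD'⟩ := h hB
  obtain rfl := τ.eq_of_mem_parts hD hD' hx (hBD' hxB)
  exact mem_sup.2 ⟨B, mem_partsWithin.2 ⟨hB, hBD'⟩, hxB⟩

lemma partsWithin_nonempty {σ τ : Finpartition u} (h : σ ≤ τ) {D : Finset α} (hD : D ∈ τ.parts) :
    (σ.partsWithin D).Nonempty := by
  rw [nonempty_iff_ne_empty]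
  intro hempty
  exact τ.ne_empty hD (by rw [← sup_partsWithin h hD, hempty, sup_empty]; rfl)

lemma partsWithin_sup {σ : Finpartition u} {P : Finset (Finset α)} (hP : P ⊆ σ.parts) :
    σ.partsWithin (P.sup id) = P := by
  ext B
  refine ⟨fun hB => ?_, fun hB => mem_partsWithin.2 ⟨hP hB, le_sup (f := id) hB⟩⟩
  obtain ⟨hBσ, hBP⟩ := mem_partsWithin.1 hB
  obtain ⟨x, hx⟩ := σ.nonempty_of_mem_parts hBσ
  obtain ⟨B', hB', hxB'⟩ := mem_sup.1 (hBP hx)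
  rwa [σ.eq_of_mem_parts hBσ (hP hB') hx hxB']

lemma injOn_partsWithin {σ τ : Finpartition u} (h : σ ≤ τ) : Set.InjOn σ.partsWithin τ.parts :=
  fun D hD E hE hDE => by rw [← sup_partsWithin h hD, hDE, sup_partsWithin h hE]

lemma disjoint_sup_of_disjoint {σ : Finpartition u} {P Q : Finset (Finset α)}
    (hP : P ⊆ σ.parts) (hQ : Q ⊆ σ.parts) (hPQ : Disjoint P Q) :
    Disjoint (P.sup id) (Q.sup id) :=
  Finset.disjoint_sup_left.2 fun _ hB => Finset.disjoint_sup_right.2 fun _ hB' =>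
    σ.disjoint (hP hB) (hQ hB') fun h => disjoint_left.1 hPQ hB (h ▸ hB')

lemma sup_nonempty {σ : Finpartition u} {P : Finset (Finset α)} (hP : P ⊆ σ.parts)
    (hne : P.Nonempty) : (P.sup id).Nonempty := by
  obtain ⟨B, hB⟩ := hne
  exact (σ.nonempty_of_mem_parts (hP hB)).mono (le_sup (f := id) hB)

def coarsen (σ : Finpartition u) (ρ : Finpartition σ.parts) : Finpartition u where
  parts := ρ.parts.image (·.sup id)
  supIndep := by
    rw [supIndep_iff_pairwiseDisjoint]
    rintro _ hP' _ hQ' hne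
    obtain ⟨P, hP, rfl⟩ := mem_image.1 hP'
    obtain ⟨Q, hQ, rfl⟩ := mem_image.1 hQ'
    exact disjoint_sup_of_disjoint (ρ.le hP) (ρ.le hQ) (ρ.disjoint hP hQ fun h => hne (h ▸ rfl))
  sup_parts := by
    rw [sup_image, Function.id_comp]
    conv_rhs => rw [← σ.sup_parts, ← ρ.biUnion_parts, sup_biUnion]
    rfl
  bot_notMem h := by
    obtain ⟨P, hP, hbot⟩ := mem_image.1 h
    exact (sup_nonempty (ρ.le hP) (ρ.nonempty_of_mem_parts hP)).ne_empty hbot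

def uncoarsen (σ τ : Finpartition u) (h : σ ≤ τ) : Finpartition σ.parts where
  parts := τ.parts.image σ.partsWithin
  supIndep := by
    rw [supIndep_iff_pairwiseDisjoint]
    rintro _ hD' _ hE' hne
    obtain ⟨D, hD, rfl⟩ := mem_image.1 hD'
    obtain ⟨E, hE, rfl⟩ := mem_image.1 hE'
    refine disjoint_left.2 fun B hBD hBE => σ.ne_empty (mem_partsWithin.1 hBD).1 ?_
    exact subset_empty.1 fun x hx => (disjoint_left.1 (τ.disjoint hD hE fun h => hne (h ▸ rfl))
      ((mem_partsWithin.1 hBD).2 hx) ((mem_partsWithin.1 hBE).2 hx)).elim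
  sup_parts := by
    refine le_antisymm (Finset.sup_le ?_) fun B hB => ?_
    · rintro _ hD'
      obtain ⟨D, -, rfl⟩ := mem_image.1 hD'
      exact filter_subset _ _
    · obtain ⟨D, hD, hBD⟩ := h hB
      exact mem_sup.2 ⟨_, mem_image_of_mem _ hD, mem_partsWithin.2 ⟨hB, hBD⟩⟩
  bot_notMem hbot := by
    obtain ⟨D, hD, hempty⟩ := mem_image.1 hbot
    exact (partsWithin_nonempty h hD).ne_empty hempty

lemma le_coarsen (σ : Finpartition u) (ρ : Finpartition σ.parts) : σ ≤ σ.coarsen ρ := by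
  intro B hB
  obtain ⟨P, hP, hBP⟩ := ρ.exists_mem hB
  exact ⟨P.sup id, mem_image_of_mem _ hP, le_sup (f := id) hBP⟩

lemma uncoarsen_coarsen (σ : Finpartition u) (ρ : Finpartition σ.parts)
    (h : σ ≤ σ.coarsen ρ) : σ.uncoarsen (σ.coarsen ρ) h = ρ := by
  refine Finpartition.ext ?_
  change (ρ.parts.image (·.sup id)).image σ.partsWithin = ρ.parts
  rw [image_image]
  exact (image_congr fun P hP => partsWithin_sup (ρ.le hP)).trans image_id

lemma coarsen_uncoarsen {σ τ : Finpartition u} (h : σ ≤ τ) : σ.coarsen (σ.uncoarsen τ h) = τ := by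
  refine Finpartition.ext ?_
  change (τ.parts.image σ.partsWithin).image (·.sup id) = τ.parts
  rw [image_image]
  exact (image_congr fun D hD => sup_partsWithin h hD).trans image_id

lemma card_uncoarsen_parts {σ τ : Finpartition u} (h : σ ≤ τ) :
    #(σ.uncoarsen τ h).parts = #τ.parts :=
  card_image_of_injOn (injOn_partsWithin h)

lemma prod_uncoarsen_parts {M : Type*} [CommMonoid M] {σ τ : Finpartition u} (h : σ ≤ τ)
    (f : Finset (Finset α) → M) :
    ∏ P ∈ (σ.uncoarsen τ h).parts, f P = ∏ D ∈ τ.parts, f (σ.partsWithin D) :=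
  prod_image (injOn_partsWithin h)

def restrictToPart {σ π : Finpartition u} (h : σ ≤ π) {C : Finset α} (hC : C ∈ π.parts) :
    Finpartition C :=
  σ.ofSubset (filter_subset _ _) (sup_partsWithin h hC)

@[simp] lemma restrictToPart_parts {σ π : Finpartition u} (h : σ ≤ π) {C : Finset α}
    (hC : C ∈ π.parts) : (σ.restrictToPart h hC).parts = σ.partsWithin C := rfl

lemma partsWithin_restrictToPart {σ π : Finpartition u} (h : σ ≤ π) {C D : Finset α}
    (hC : C ∈ π.parts) (hDC : D ⊆ C) :
    (σ.restrictToPart h hC).partsWithin D = σ.partsWithin D := by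
  ext B
  simp only [mem_partsWithin, restrictToPart_parts]
  exact ⟨fun ⟨⟨hB, _⟩, hBD⟩ => ⟨hB, hBD⟩, fun ⟨hB, hBD⟩ => ⟨⟨hB, hBD.trans hDC⟩, hBD⟩⟩

lemma restrictToPart_mono {σ τ π : Finpartition u} (hστ : σ ≤ τ) (hσπ : σ ≤ π) (hτπ : τ ≤ π)
    {C : Finset α} (hC : C ∈ π.parts) : σ.restrictToPart hσπ hC ≤ τ.restrictToPart hτπ hC := by
  intro B hB
  obtain ⟨hBσ, hBC⟩ := mem_partsWithin.1 hB
  obtain ⟨D, hD, hBD⟩ := hστ hBσ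
  obtain ⟨C', hC', hDC'⟩ := hτπ hD
  obtain rfl := eq_of_subset_of_subset_parts (σ.nonempty_of_mem_parts hBσ) hC hC' hBC
    (hBD.trans hDC')
  exact ⟨D, mem_partsWithin.2 ⟨hD, hDC'⟩, hBD⟩

lemma bind_le (π : Finpartition u) (Q : ∀ C ∈ π.parts, Finpartition C) : π.bind Q ≤ π := by
  intro D hD
  obtain ⟨C, hC, hD⟩ := mem_bind.1 hD
  exact ⟨C, hC, (Q C hC).le hD⟩

lemma le_bind {σ π : Finpartition u} (h : σ ≤ π) {Q : ∀ C ∈ π.parts, Finpartition C}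
    (hQ : ∀ C (hC : C ∈ π.parts), σ.restrictToPart h hC ≤ Q C hC) : σ ≤ π.bind Q := by
  intro B hB
  obtain ⟨C, hC, hBC⟩ := h hB
  obtain ⟨D, hD, hBD⟩ := hQ C hC (mem_partsWithin.2 ⟨hB, hBC⟩)
  exact ⟨D, mem_bind.2 ⟨C, hC, hD⟩, hBD⟩

lemma bind_restrictToPart {τ π : Finpartition u} (h : τ ≤ π) :
    π.bind (fun _ hC => τ.restrictToPart h hC) = τ := by
  refine Finpartition.ext (Finset.ext fun D => ?_)
  simp only [mem_bind, restrictToPart_parts, mem_partsWithin]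
  refine ⟨fun ⟨_, _, hD, _⟩ => hD, fun hD => ?_⟩
  obtain ⟨C, hC, hDC⟩ := h hD
  exact ⟨C, hC, hD, hDC⟩

lemma restrictToPart_bind {π : Finpartition u} (Q : ∀ C ∈ π.parts, Finpartition C)
    {C : Finset α} (hC : C ∈ π.parts) : (π.bind Q).restrictToPart (π.bind_le Q) hC = Q C hC := by
  refine Finpartition.ext (Finset.ext fun D => ?_)
  simp only [restrictToPart_parts, mem_partsWithin, mem_bind]
  refine ⟨fun ⟨⟨C', hC', hD⟩, hDC⟩ => ?_, fun hD => ⟨⟨C, hC, hD⟩, (Q C hC).le hD⟩⟩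
  obtain rfl := eq_of_subset_of_subset_parts ((Q C' hC').nonempty_of_mem_parts hD) hC hC' hDC
    ((Q C' hC').le hD)
  exact hD

lemma prod_parts_eq_prod_prod_partsWithin {M : Type*} [CommMonoid M] {τ π : Finpartition u}
    (h : τ ≤ π) (f : Finset α → M) :
    ∏ D ∈ τ.parts, f D = ∏ C ∈ π.parts, ∏ D ∈ τ.partsWithin C, f D := by
  have hparts : τ.parts = π.parts.biUnion τ.partsWithin := by
    ext D
    simp only [mem_biUnion, mem_partsWithin]
    exact ⟨fun hD => (h hD).imp fun C ⟨hC, hDC⟩ => ⟨hC, hD, hDC⟩, fun ⟨_, _, hD, _⟩ => hD⟩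
  rw [hparts, prod_biUnion]
  intro C hC C' hC' hne
  refine disjoint_left.2 fun D hD hD' => hne ?_
  obtain ⟨hDτ, hDC⟩ := mem_partsWithin.1 hD
  exact eq_of_subset_of_subset_parts (τ.nonempty_of_mem_parts hDτ) hC hC' hDC
    (mem_partsWithin.1 hD').2

def intervalEquiv {σ π : Finpartition u} (h : σ ≤ π) :
    {τ // σ ≤ τ ∧ τ ≤ π} ≃ ∀ C : π.parts, Finpartition (σ.partsWithin C) where
  toFun τ C := (σ.restrictToPart h C.2).uncoarsen (τ.1.restrictToPart τ.2.2 C.2)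
    (restrictToPart_mono τ.2.1 h τ.2.2 C.2)
  invFun ρ := ⟨π.bind fun C hC => (σ.restrictToPart h hC).coarsen (ρ ⟨C, hC⟩),
    le_bind h fun _ _ => le_coarsen _ _, π.bind_le _⟩
  left_inv τ := Subtype.ext <| by simp only [coarsen_uncoarsen, bind_restrictToPart τ.2.2]
  right_inv ρ := funext fun C => by
    simp only [restrictToPart_bind]
    exact uncoarsen_coarsen _ _ _

lemma intervalEquiv_apply {σ π : Finpartition u} (h : σ ≤ π) (τ : {τ // σ ≤ τ ∧ τ ≤ π})
    (C : π.parts) : intervalEquiv h τ C = (σ.restrictToPart h C.2).uncoarsen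
      (τ.1.restrictToPart τ.2.2 C.2) (restrictToPart_mono τ.2.1 h τ.2.2 C.2) := rfl

end Interval

end Finpartition

section MuQ

open Finpartition

variable {S : Type*} [DecidableEq S] {s : Finset S} {R : Type*} [CommRing R]

lemma muQ_of_le {q1 q2 : R} {σ π : Finpartition s} (h : σ ≤ π) :
    muQ q1 q2 σ π = ∏ C ∈ π.parts, muBlock q1 q2 #(σ.partsWithin C) := if_pos h

lemma muQ_of_not_le {q1 q2 : R} {σ π : Finpartition s} (h : ¬σ ≤ π) : muQ q1 q2 σ π = 0 :=
  if_neg h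

lemma muQ_mul_muQ_of_not_mem_interval (q1 q2 q3 : R) {σ τ π : Finpartition s}
    (h : ¬(σ ≤ τ ∧ τ ≤ π)) : muQ q1 q2 σ τ * muQ q2 q3 τ π = 0 := by
  by_cases hστ : σ ≤ τ
  · rw [muQ_of_not_le fun hτπ => h ⟨hστ, hτπ⟩, mul_zero]
  · rw [muQ_of_not_le hστ, zero_mul]

lemma muQ_mul_muQ_eq_prod_muChain (q1 q2 q3 : R) {σ π : Finpartition s} (h : σ ≤ π)
    (τ : {τ // σ ≤ τ ∧ τ ≤ π}) :
    muQ q1 q2 σ τ * muQ q2 q3 τ π = ∏ C : π.parts, muChain q1 q2 q3 (intervalEquiv h τ C) := by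
  simp only [muQ_of_le τ.2.1, muQ_of_le τ.2.2, intervalEquiv_apply, muChain,
    prod_uncoarsen_parts, card_uncoarsen_parts, restrictToPart_parts]
  rw [prod_parts_eq_prod_prod_partsWithin τ.2.2, ← prod_mul_distrib, ← prod_coe_sort π.parts]
  refine prod_congr rfl fun C _ => congrArg (· * _) (prod_congr rfl fun D hD => ?_)
  rw [partsWithin_restrictToPart h C.2 (mem_partsWithin.1 hD).2]

theorem sum_muQ_mul_muQ (q1 q2 q3 : R) (σ π : Finpartition s) :
    ∑ τ, muQ q1 q2 σ τ * muQ q2 q3 τ π = muQ q1 q3 σ π := by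
  by_cases hσπ : σ ≤ π
  · calc ∑ τ, muQ q1 q2 σ τ * muQ q2 q3 τ π
        = ∑ τ : {τ // σ ≤ τ ∧ τ ≤ π}, muQ q1 q2 σ τ * muQ q2 q3 τ π := by
          rw [← sum_filter_of_ne fun τ _ hne => not_not.1 fun h =>
            hne (muQ_mul_muQ_of_not_mem_interval q1 q2 q3 h)]
          exact sum_subtype _ (fun τ => by simp) _
      _ = ∑ ρ : ∀ C : π.parts, Finpartition (σ.partsWithin C), ∏ C, muChain q1 q2 q3 (ρ C) := by
          simp only [muQ_mul_muQ_eq_prod_muChain q1 q2 q3 hσπ]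
          exact (intervalEquiv hσπ).sum_comp fun ρ => ∏ C, muChain q1 q2 q3 (ρ C)
      _ = ∏ C : π.parts, muBlock q1 q3 #(σ.partsWithin C) := by
          simp only [← Fintype.prod_sum, sum_muChain]
      _ = muQ q1 q3 σ π := by
          rw [muQ_of_le hσπ]
          exact prod_coe_sort π.parts fun C => muBlock q1 q3 #(σ.partsWithin C)
  · rw [muQ_of_not_le hσπ]
    exact sum_eq_zero fun τ _ => muQ_mul_muQ_of_not_mem_interval q1 q2 q3
      fun ⟨hστ, hτπ⟩ => hσπ (hστ.trans hτπ)

end MuQ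

theorem stmt4 {S : Type*} [Fintype S] [DecidableEq S] {R : Type*} [CommRing R]
    (q1 q2 q3 : R) (σ π : Finpartition (Finset.univ : Finset S)) :
    ∑ τ : Finpartition (Finset.univ : Finset S), muQ q1 q2 σ τ * muQ q2 q3 τ π
      = muQ q1 q3 σ π :=
  sum_muQ_mul_muQ q1 q2 q3 σ π
end

section
/- Fortuin–Kasteleyn representation: Let G = (V,E) be a finite simple graph, let R be a commutative ring, let v : E → R be edge weights, and let q ≥ 1 be an integer. Then Σ_{A ⊆ E} (q : R)^{k(A)} ∏_{e ∈ A} v_e = Σ_{σ : V → {1,…,q}} ∏_{e = {i,j} ∈ E} (1 + v_e · δ(σ(i), σ(j))), where k(A) denotes the number of connected components of the spanning subgraph (V, A) and δ is the Kronecker delta (δ(a,b) = 1 if a = b, else 0). -/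
/-!
Expanding each factor `1 + v_e δ_e(σ)` turns the right-hand side into
`∑_{A ⊆ E} (∏_{e ∈ A} v_e) · #{σ | σ is constant on every edge of A}`. A colouring that is
constant on the edges of `A` is the same thing as a colouring of the connected components of
`(V, A)`, so there are exactly `q ^ k(A)` of them.
-/

open Finset SimpleGraph

/-- The number of connected components of the graph on the vertex set `W`
with edge set `A` (isolated vertices count as components). -/
noncomputable def kcomp {V : Type*} [Fintype V] [DecidableEq V]
    (W : Finset V) (A : Finset (Sym2 V)) : ℕ :=
  Nat.card ((SimpleGraph.fromEdgeSet (A : Set (Sym2 V))).induce (W : Set V)).ConnectedComponent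

namespace SimpleGraph

variable {V α : Type*} {H : SimpleGraph V}

theorem Reachable.eq_of_forall_adj_eq {f : V → α} (hf : ∀ x y, H.Adj x y → f x = f y)
    {a b : V} (hab : H.Reachable a b) : f a = f b := by
  obtain ⟨p⟩ := hab
  induction p with
  | nil => rfl
  | cons hadj _ ih => exact (hf _ _ hadj).trans ih

def edgewiseConstEquiv (H : SimpleGraph V) (α : Type*) :
    {f : V → α // ∀ x y, H.Adj x y → f x = f y} ≃ (H.ConnectedComponent → α) where
  toFun f := ConnectedComponent.lift f.1 fun _ _ p _ => p.reachable.eq_of_forall_adj_eq f.2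
  invFun g := ⟨fun x => g (H.connectedComponentMk x), fun _ _ hxy =>
    congrArg g (ConnectedComponent.connectedComponentMk_eq_of_adj hxy)⟩
  left_inv _ := rfl
  right_inv _ := funext <| ConnectedComponent.ind fun _ => rfl

end SimpleGraph

section

variable {V : Type*} [Fintype V] [DecidableEq V]

theorem kcomp_univ (A : Finset (Sym2 V)) :
    kcomp (univ : Finset V) A = Nat.card (fromEdgeSet (A : Set (Sym2 V))).ConnectedComponent := by
  rw [kcomp, coe_univ]
  exact Nat.card_congr (induceUnivIso _).connectedComponentEquiv

omit [Fintype V] [DecidableEq V] in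
theorem forall_isDiag_map_iff {α : Type*} (A : Finset (Sym2 V)) (σ : V → α) :
    (∀ e ∈ A, (e.map σ).IsDiag) ↔ ∀ x y, (fromEdgeSet (A : Set (Sym2 V))).Adj x y → σ x = σ y := by
  refine ⟨fun h x y hxy => ?_, fun h e he => ?_⟩
  · simpa using h _ ((fromEdgeSet_adj _).1 hxy).1
  · induction e with
    | h x y =>
      rw [Sym2.map_mk, Sym2.mk_isDiag_iff]
      rcases eq_or_ne x y with rfl | hxy
      · rfl
      · exact h x y ((fromEdgeSet_adj _).2 ⟨he, hxy⟩)

theorem card_filter_forall_isDiag_map {α : Type*} [Fintype α] [DecidableEq α]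
    (A : Finset (Sym2 V)) :
    #{σ : V → α | ∀ e ∈ A, (e.map σ).IsDiag} = Fintype.card α ^ kcomp (univ : Finset V) A := by
  rw [← Fintype.card_subtype, ← Nat.card_eq_fintype_card, ← Nat.card_eq_fintype_card,
    kcomp_univ, ← Nat.card_fun]
  exact Nat.card_congr <| (Equiv.subtypeEquivRight fun σ => forall_isDiag_map_iff A σ).trans
    (edgewiseConstEquiv _ α)

theorem sum_prod_ite_isDiag_map {R α : Type*} [CommSemiring R] [Fintype α] [DecidableEq α]
    (A : Finset (Sym2 V)) :
    ∑ σ : V → α, ∏ e ∈ A, (if (e.map σ).IsDiag then 1 else 0 : R)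
      = (Fintype.card α : R) ^ kcomp (univ : Finset V) A := by
  rw [← Nat.cast_pow, ← card_filter_forall_isDiag_map, natCast_card_filter]
  -- `convert` reconciles the two decidability instances of `∀ e ∈ A, _`
  exact sum_congr rfl fun _ _ => by convert prod_boole

theorem sum_prod_one_add_mul_ite_isDiag {R α : Type*} [CommSemiring R] [Fintype α] [DecidableEq α]
    (E : Finset (Sym2 V)) (v : Sym2 V → R) :
    ∑ σ : V → α, ∏ e ∈ E, (1 + v e * if (e.map σ).IsDiag then 1 else 0)
      = ∑ A ∈ E.powerset, (Fintype.card α : R) ^ kcomp (univ : Finset V) A * ∏ e ∈ A, v e := by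
  simp_rw [prod_one_add, prod_mul_distrib]
  rw [sum_comm]
  refine sum_congr rfl fun A _ => ?_
  rw [← mul_sum, sum_prod_ite_isDiag_map, mul_comm]

end

theorem stmt5_general {V : Type*} [Fintype V] [DecidableEq V] {R : Type*} [CommRing R]
    (G : SimpleGraph V) [DecidableRel G.Adj] (v : Sym2 V → R) (q : ℕ) :
    ∑ A ∈ G.edgeFinset.powerset, (q : R) ^ kcomp (Finset.univ : Finset V) A * ∏ e ∈ A, v e
      = ∑ σ : V → Fin q, ∏ e ∈ G.edgeFinset,
          (1 + v e * (if (e.map σ).IsDiag then 1 else 0)) := by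
  simpa only [Fintype.card_fin] using (sum_prod_one_add_mul_ite_isDiag (α := Fin q) G.edgeFinset v).symm

/-- Fortuin–Kasteleyn representation of the Potts model:
`Σ_{A ⊆ E} q^{k(A)} ∏_{e ∈ A} v_e
  = Σ_{σ : V → [q]} ∏_{e = ij ∈ E} (1 + v_e δ(σ(i),σ(j)))`. -/
theorem stmt5 {V : Type*} [Fintype V] [DecidableEq V] {R : Type*} [CommRing R]
    (G : SimpleGraph V) [DecidableRel G.Adj] (v : Sym2 V → R) (q : ℕ) (hq : 1 ≤ q) :
    ∑ A ∈ G.edgeFinset.powerset, (q : R) ^ kcomp (Finset.univ : Finset V) A * ∏ e ∈ A, v e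
      = ∑ σ : V → Fin q, ∏ e ∈ G.edgeFinset,
          (1 + v e * (if (e.map σ).IsDiag then 1 else 0)) :=
  stmt5_general G v q
end

section
/- Let G = (V,E) be a finite simple graph with V nonempty, let R be a commutative ring, let v : E → R be edge weights, and let q1, q2 ∈ R. Then Ẑ_G(q2, v) = Σ_{π ∈ Π(V)} ( ∏_{j=1}^{|π|-1} (q2 - j·q1) ) · ∏_{B ∈ π} Ẑ_{G[B]}(q1, v), where the sum runs over all partitions π of V into nonempty blocks, |π| is the number of blocks of π, and G[B] is the induced subgraph of G on the block B. -/
open Finset SimpleGraph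

/-- The edges of `G` with both endpoints in `W`, i.e. the edges of the
induced subgraph `G[W]`. -/
def edgesWithin {V : Type*} [Fintype V] [DecidableEq V]
    (G : SimpleGraph V) [DecidableRel G.Adj] (W : Finset V) : Finset (Sym2 V) :=
  G.edgeFinset.filter (fun e => ∀ x ∈ e, x ∈ W)

/-- The multivariate Tutte polynomial of the induced subgraph `G[W]`:
`Z_{G[W]}(q,v) = Σ_{A ⊆ E(G[W])} q^{k(A)} ∏_{e ∈ A} v_e`. -/
noncomputable def Zmv {V : Type*} [Fintype V] [DecidableEq V] {R : Type*} [CommRing R]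
    (G : SimpleGraph V) [DecidableRel G.Adj] (W : Finset V) (q : R) (v : Sym2 V → R) : R :=
  ∑ A ∈ (edgesWithin G W).powerset, q ^ kcomp W A * ∏ e ∈ A, v e

/-- `Ẑ_{G[W]}(q,v) = Σ_{A ⊆ E(G[W])} q^{k(A)-1} ∏_{e ∈ A} v_e`. -/
noncomputable def ZhatMv {V : Type*} [Fintype V] [DecidableEq V] {R : Type*} [CommRing R]
    (G : SimpleGraph V) [DecidableRel G.Adj] (W : Finset V) (q : R) (v : Sym2 V → R) : R :=
  ∑ A ∈ (edgesWithin G W).powerset, q ^ (kcomp W A - 1) * ∏ e ∈ A, v e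

/-- The generating polynomial of connected spanning subgraphs of `G[W]`:
`C_{G[W]}(v) = Σ_{A ⊆ E(G[W]) : k(A)=1} ∏_{e ∈ A} v_e`. -/
noncomputable def Cmv {V : Type*} [Fintype V] [DecidableEq V] {R : Type*} [CommRing R]
    (G : SimpleGraph V) [DecidableRel G.Adj] (W : Finset V) (v : Sym2 V → R) : R :=
  ∑ A ∈ (edgesWithin G W).powerset.filter (fun A => kcomp W A = 1), ∏ e ∈ A, v e

/-! Splitting an edge set `A ⊆ E(G[W])` at the component `S` of a fixed vertex `x ∈ W` gives
`Ẑ_W(q) = Σ_{S ∋ x} C_S Z_{W∖S}(q)` and `Z_W(q) = q Ẑ_W(q)`. By induction on `W` this yields the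
convolution `Z_W(a + b) = Σ_{U ⊆ W} Z_U(a) Z_{W∖U}(b)`, hence
`Ẑ_W(a + b) = Σ_{S ∋ x} Ẑ_S(a) Z_{W∖S}(b)`.
Grouping partitions by the block containing `x` and inducting on `W` then gives
`Z_W(q) = Σ_π q (q - q₁) ⋯ (q - (|π| - 1) q₁) ∏_{B ∈ π} Ẑ_B(q₁)`, and one more application of the
convolution with `a = q₁`, `b = q₂ - q₁` gives the theorem without ever dividing by `q₂`. -/

section PowersetSums

variable {α β : Type*} [DecidableEq α] [AddCommMonoid β] {x : α} {M : Finset α}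

lemma sum_powerset_notMem_eq (hx : x ∈ M) (f : Finset α → Finset α → β) :
    ∑ U ∈ M.powerset with x ∉ U, f U (M \ U) = ∑ U ∈ M.powerset with x ∈ U, f (M \ U) U := by
  refine sum_bij' (fun U _ => M \ U) (fun U _ => M \ U) ?_ ?_ ?_ ?_ ?_
  all_goals intro U hU; simp only [mem_filter, mem_powerset] at hU ⊢
  · exact ⟨sdiff_subset, mem_sdiff.2 ⟨hx, hU.2⟩⟩
  · exact ⟨sdiff_subset, fun h => (mem_sdiff.1 h).2 hU.2⟩
  · exact Finset.sdiff_sdiff_eq_self hU.1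
  · exact Finset.sdiff_sdiff_eq_self hU.1
  · rw [Finset.sdiff_sdiff_eq_self hU.1]

lemma sum_powerset_mem_sum_powerset_mem (F : Finset α → Finset α → Finset α → β) :
    ∑ U ∈ M.powerset with x ∈ U, ∑ S ∈ U.powerset with x ∈ S, F S (U \ S) (M \ U)
      = ∑ S ∈ M.powerset with x ∈ S, ∑ T ∈ (M \ S).powerset, F S T ((M \ S) \ T) := by
  rw [sum_sigma', sum_sigma']
  refine sum_bij' (fun p _ => ⟨p.2, p.1 \ p.2⟩) (fun p _ => ⟨p.1 ∪ p.2, p.1⟩) ?_ ?_ ?_ ?_ ?_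
  all_goals rintro ⟨A, B⟩ hp; simp only [mem_sigma, mem_filter, mem_powerset] at hp ⊢
  · exact ⟨⟨hp.2.1.trans hp.1.1, hp.2.2⟩, sdiff_subset_sdiff hp.1.1 subset_rfl⟩
  · exact ⟨⟨union_subset hp.1.1 (hp.2.trans sdiff_subset), mem_union_left _ hp.1.2⟩,
      subset_union_left, hp.1.2⟩
  · rw [union_sdiff_of_subset hp.2.1]
  · rw [union_sdiff_cancel_left (disjoint_of_subset_right hp.2 disjoint_sdiff)]
  · rw [sdiff_sdiff_left, sup_eq_union, union_sdiff_of_subset hp.2.1]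

end PowersetSums

section Partitions

variable {α : Type*} [DecidableEq α]

lemma Finpartition.avoid_parts_of_mem {W S : Finset α} (π : Finpartition W) (hS : S ∈ π.parts) :
    (π.avoid S).parts = π.parts.erase S := by
  ext c
  rw [Finpartition.mem_avoid, mem_erase]
  constructor
  · rintro ⟨d, hd, hdS, rfl⟩
    have hne : d ≠ S := by rintro rfl; exact hdS le_rfl
    have hdisj : Disjoint d S := π.disjoint hd hS hne
    rw [Finset.sdiff_eq_self_iff_disjoint.2 hdisj]
    exact ⟨hne, hd⟩
  · rintro ⟨hne, hc⟩
    have hdisj : Disjoint c S := π.disjoint hc hS hne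
    exact ⟨c, hc, fun hle => π.ne_bot hc (hdisj.eq_bot_of_le hle),
      Finset.sdiff_eq_self_iff_disjoint.2 hdisj⟩

lemma sum_finpartition_eq_sum_part {R : Type*} [CommSemiring R] {W : Finset α} {x : α}
    (hx : x ∈ W) (F : ℕ → R) (g : Finset α → R) :
    ∑ π : Finpartition W, F #π.parts * ∏ B ∈ π.parts, g B
      = ∑ S ∈ W.powerset with x ∈ S,
          g S * ∑ π : Finpartition (W \ S), F (#π.parts + 1) * ∏ B ∈ π.parts, g B := by
  rw [← sum_fiberwise_of_maps_to (g := fun π : Finpartition W => π.part x)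
    (t := {S ∈ W.powerset | x ∈ S})
    fun π _ => mem_filter.2 ⟨mem_powerset.2 (π.le (π.part_mem.2 hx)), π.mem_part hx⟩]
  refine sum_congr rfl fun S hS => ?_
  obtain ⟨hSW, hxS⟩ := mem_filter.1 hS
  have hS_ne : S ≠ ⊥ := ne_empty_of_mem hxS
  have hsup : (W \ S) ⊔ S = W := sdiff_union_of_subset (mem_powerset.1 hSW)
  have hS_mem {π : Finpartition W} (hπ : π ∈ univ.filter fun π => π.part x = S) : S ∈ π.parts :=
    (mem_filter.1 hπ).2 ▸ π.part_mem.2 hx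
  have hS_mem_extend (π : Finpartition (W \ S)) :
      S ∈ (π.extend hS_ne sdiff_disjoint hsup).parts := by
    rw [Finpartition.extend_parts]
    exact mem_insert_self _ _
  rw [mul_sum]
  refine sum_bij' (fun π _ => π.avoid S) (fun π _ => π.extend hS_ne sdiff_disjoint hsup)
    (fun _ _ => mem_univ _) (fun π _ => mem_filter.2 ⟨mem_univ _, Finpartition.part_eq_of_mem _
      (hS_mem_extend π) hxS⟩) (fun π hπ => ?_) (fun π _ => ?_) (fun π hπ => ?_)
  · ext1
    rw [Finpartition.extend_parts, π.avoid_parts_of_mem (hS_mem hπ), insert_erase (hS_mem hπ)]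
  · have hS_notMem : S ∉ π.parts := fun h => (mem_sdiff.1 (π.le h hxS)).2 hxS
    ext1
    rw [Finpartition.avoid_parts_of_mem _ (hS_mem_extend π), Finpartition.extend_parts,
      erase_insert hS_notMem]
  · rw [π.avoid_parts_of_mem (hS_mem hπ), card_erase_add_one (hS_mem hπ),
      ← mul_prod_erase π.parts g (hS_mem hπ), mul_left_comm]

end Partitions

section FallingProd

variable {R : Type*} [CommRing R]

def fallingProd (q h : R) (n : ℕ) : R := ∏ j ∈ range n, (q - j * h)

lemma fallingProd_zero (q h : R) : fallingProd q h 0 = 1 := prod_range_zero _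

lemma fallingProd_succ (q h : R) (n : ℕ) :
    fallingProd q h (n + 1) = q * fallingProd (q - h) h n := by
  rw [fallingProd, fallingProd, prod_range_succ']
  simp only [Nat.cast_add, Nat.cast_one, Nat.cast_zero, zero_mul, sub_zero]
  rw [mul_comm]
  exact congrArg (q * ·) (prod_congr rfl fun j _ => by ring)

lemma prod_Icc_one_eq_fallingProd (q h : R) (n : ℕ) :
    ∏ j ∈ Icc 1 n, (q - j * h) = fallingProd (q - h) h n := by
  rw [fallingProd, ← Ico_add_one_right_eq_Icc, prod_Ico_eq_prod_range, Nat.add_sub_cancel]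
  exact prod_congr rfl fun j _ => by push_cast; ring

end FallingProd

section LinkedComponents

variable {V : Type*}

def Linked (A : Finset (Sym2 V)) : V → V → Prop :=
  Relation.ReflTransGen fun a b => s(a, b) ∈ A

namespace Linked

variable {A B : Finset (Sym2 V)} {a b c : V}

lemma refl : Linked A a a := Relation.ReflTransGen.refl

lemma single (h : s(a, b) ∈ A) : Linked A a b := Relation.ReflTransGen.single h

lemma trans (h : Linked A a b) (h' : Linked A b c) : Linked A a c :=
  Relation.ReflTransGen.trans h h'

lemma symm (h : Linked A a b) : Linked A b a := by
  induction h with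
  | refl => exact refl
  | tail _ hbc ih => exact Relation.ReflTransGen.head (by rwa [Sym2.eq_swap]) ih

lemma mono (hAB : A ⊆ B) (h : Linked A a b) : Linked B a b :=
  Relation.ReflTransGen.mono (fun _ _ hab => hAB hab) _ _ h

end Linked

open Classical in
noncomputable def component (A : Finset (Sym2 V)) (W : Finset V) (x : V) : Finset V :=
  W.filter (Linked A x)

variable {A : Finset (Sym2 V)} {W : Finset V} {x y : V}

lemma mem_component : y ∈ component A W x ↔ y ∈ W ∧ Linked A x y := by
  classical
  simp [component]

lemma component_subset : component A W x ⊆ W := fun _ hy => (mem_component.1 hy).1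

lemma self_mem_component (hx : x ∈ W) : x ∈ component A W x := mem_component.2 ⟨hx, .refl⟩

lemma component_eq_of_linked (h : Linked A x y) : component A W y = component A W x := by
  ext z
  simp only [mem_component]
  exact and_congr_right fun _ => ⟨h.trans, h.symm.trans⟩

end LinkedComponents

section Components

variable {V : Type*} [Fintype V] [DecidableEq V]

def edgesIn (A : Finset (Sym2 V)) (U : Finset V) : Finset (Sym2 V) :=
  A.filter fun e => ∀ y ∈ e, y ∈ U

variable {A : Finset (Sym2 V)} {U W : Finset V} {a b x y : V}

lemma mem_edgesIn {e : Sym2 V} : e ∈ edgesIn A U ↔ e ∈ A ∧ ∀ y ∈ e, y ∈ U :=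
  mem_filter

lemma edgesIn_subset : edgesIn A U ⊆ A := filter_subset _ _

lemma mem_edgesIn_of_closed (hU : ∀ a b, s(a, b) ∈ A → a ∈ U → b ∈ U) (he : s(a, b) ∈ A)
    (ha : a ∈ U) : s(a, b) ∈ edgesIn A U := by
  refine mem_edgesIn.2 ⟨he, fun y hy => ?_⟩
  rcases Sym2.mem_iff.1 hy with rfl | rfl
  exacts [ha, hU _ _ he ha]

lemma Linked.of_closed (hU : ∀ a b, s(a, b) ∈ A → a ∈ U → b ∈ U) (ha : a ∈ U)
    (h : Linked A a b) : b ∈ U ∧ Linked (edgesIn A U) a b := by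
  induction h with
  | refl => exact ⟨ha, .refl⟩
  | @tail b c _ hbc ih =>
    exact ⟨hU b c hbc ih.1, ih.2.trans (.single (mem_edgesIn_of_closed hU hbc ih.1))⟩

variable {G : SimpleGraph V} [DecidableRel G.Adj]

lemma mem_of_mem_edgesWithin {e : Sym2 V} (he : e ∈ edgesWithin G W) (hy : y ∈ e) : y ∈ W :=
  (mem_filter.1 he).2 y hy

lemma linked_iff_reachable (hA : A ⊆ edgesWithin G W) {a b : (W : Set V)} :
    Linked A a b ↔ ((fromEdgeSet (A : Set (Sym2 V))).induce (W : Set V)).Reachable a b := by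
  rw [reachable_iff_reflTransGen]
  constructor
  · obtain ⟨a, ha⟩ := a
    obtain ⟨b, hb⟩ := b
    intro (h : Linked A a b)
    induction h with
    | refl => exact .refl
    | @tail b c _ hbc ih =>
      have hbc' : G.Adj b c := (mem_edgeSet G).1 (mem_edgeFinset.1 (mem_filter.1 (hA hbc)).1)
      refine (ih (mem_of_mem_edgesWithin (hA hbc) (Sym2.mem_mk_left b c))).tail ?_
      simp only [comap_adj, Function.Embedding.coe_subtype, fromEdgeSet_adj]
      exact ⟨by exact_mod_cast hbc, hbc'.ne⟩
  · refine Relation.ReflTransGen.lift Subtype.val (fun p q hpq => ?_) _ _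
    simp only [comap_adj, Function.Embedding.coe_subtype, fromEdgeSet_adj] at hpq
    exact_mod_cast hpq.1

lemma kcomp_eq_card_image_component (hA : A ⊆ edgesWithin G W) :
    kcomp W A = (W.image (component A W)).card := by
  rw [kcomp, ← Nat.card_eq_finsetCard]
  refine Nat.card_eq_of_bijective (ConnectedComponent.lift
      (fun u => (⟨component A W u, mem_image_of_mem _ (mem_coe.1 u.2)⟩ : W.image (component A W)))
      fun u w p _ => Subtype.ext
        (component_eq_of_linked ((linked_iff_reachable hA).2 ⟨p⟩)).symm) ⟨?_, ?_⟩
  · refine ConnectedComponent.ind₂ fun u w huw => ConnectedComponent.eq.2 ?_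
    have hcomp : component A W w = component A W u := Subtype.ext_iff.1 huw.symm
    have hw : w.1 ∈ component A W u := hcomp ▸ self_mem_component (mem_coe.1 w.2)
    exact (linked_iff_reachable hA).1 (mem_component.1 hw).2
  · rintro ⟨_, hp⟩
    obtain ⟨w, hw, rfl⟩ := mem_image.1 hp
    exact ⟨connectedComponentMk _ ⟨w, mem_coe.2 hw⟩, rfl⟩

end Components

section Splitting

variable {V : Type*} [Fintype V] [DecidableEq V] {G : SimpleGraph V} [DecidableRel G.Adj]
  {W S : Finset V} {A B : Finset (Sym2 V)} {x : V}

lemma edgesIn_subset_edgesWithin (hA : A ⊆ edgesWithin G W) (U : Finset V) :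
    edgesIn A U ⊆ edgesWithin G U := fun _ he =>
  mem_filter.2 ⟨(mem_filter.1 (hA (edgesIn_subset he))).1, (mem_edgesIn.1 he).2⟩

lemma edgesWithin_mono (hSW : S ⊆ W) : edgesWithin G S ⊆ edgesWithin G W := fun _ he =>
  mem_filter.2 ⟨(mem_filter.1 he).1, fun y hy => hSW ((mem_filter.1 he).2 y hy)⟩

lemma disjoint_edgesIn (hSW : Disjoint S W) : Disjoint (edgesIn A S) (edgesIn B W) := by
  refine disjoint_left.2 fun e heS heW => ?_
  induction e with
  | _ a b =>
    exact disjoint_left.1 hSW ((mem_edgesIn.1 heS).2 a (Sym2.mem_mk_left a b))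
      ((mem_edgesIn.1 heW).2 a (Sym2.mem_mk_left a b))

lemma edgesIn_union (U : Finset V) : edgesIn (A ∪ B) U = edgesIn A U ∪ edgesIn B U :=
  filter_union _ _ _

lemma edgesIn_eq_self (hB : B ⊆ edgesWithin G S) : edgesIn B S = B :=
  filter_true_of_mem fun _ he _ hy => mem_of_mem_edgesWithin (hB he) hy

lemma edgesIn_eq_empty (hB : B ⊆ edgesWithin G W) (hSW : Disjoint S W) : edgesIn B S = ∅ :=
  filter_false_of_mem fun e he hS => by
    induction e with
    | _ a b =>
      exact disjoint_left.1 hSW (hS a (Sym2.mem_mk_left a b))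
        (mem_of_mem_edgesWithin (hB he) (Sym2.mem_mk_left a b))

lemma component_closed (hA : A ⊆ edgesWithin G W) {a b : V} (he : s(a, b) ∈ A)
    (ha : a ∈ component A W x) :
    b ∈ component A W x :=
  mem_component.2 ⟨mem_of_mem_edgesWithin (hA he) (Sym2.mem_mk_right a b),
    (mem_component.1 ha).2.trans (.single he)⟩

lemma sdiff_component_closed (hA : A ⊆ edgesWithin G W) {a b : V} (he : s(a, b) ∈ A)
    (ha : a ∈ W \ component A W x) :
    b ∈ W \ component A W x :=
  mem_sdiff.2 ⟨mem_of_mem_edgesWithin (hA he) (Sym2.mem_mk_right a b),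
    fun hb => (mem_sdiff.1 ha).2 (component_closed hA (Sym2.eq_swap ▸ he) hb)⟩

lemma edgesIn_component_union_edgesIn_sdiff (hA : A ⊆ edgesWithin G W) :
    edgesIn A (component A W x) ∪ edgesIn A (W \ component A W x) = A := by
  refine (union_subset edgesIn_subset edgesIn_subset).antisymm fun e he => ?_
  induction e with
  | _ a b =>
    by_cases ha : a ∈ component A W x
    · exact mem_union_left _ (mem_edgesIn_of_closed (fun _ _ => component_closed hA) he ha)
    · exact mem_union_right _ (mem_edgesIn_of_closed (fun _ _ => sdiff_component_closed hA) he
        (mem_sdiff.2 ⟨mem_of_mem_edgesWithin (hA he) (Sym2.mem_mk_left a b), ha⟩))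

lemma component_edgesIn_component (hA : A ⊆ edgesWithin G W) (hx : x ∈ W) {w : V}
    (hw : w ∈ component A W x) :
    component (edgesIn A (component A W x)) (component A W x) w = component A W x := by
  have hlink : ∀ z ∈ component A W x, Linked (edgesIn A (component A W x)) x z := fun z hz =>
    (Linked.of_closed (fun _ _ => component_closed hA) (self_mem_component hx)
      (mem_component.1 hz).2).2
  exact component_subset.antisymm fun y hy =>
    mem_component.2 ⟨hy, (hlink w hw).symm.trans (hlink y hy)⟩

lemma component_edgesIn_sdiff (hA : A ⊆ edgesWithin G W) {w : V} (hw : w ∈ W \ component A W x) :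
    component (edgesIn A (W \ component A W x)) (W \ component A W x) w = component A W w := by
  ext y
  simp only [mem_component]
  constructor
  · rintro ⟨hy, h⟩
    exact ⟨(mem_sdiff.1 hy).1, h.mono edgesIn_subset⟩
  · rintro ⟨-, h⟩
    exact Linked.of_closed (fun _ _ => sdiff_component_closed hA) hw h

lemma kcomp_edgesIn_component (hA : A ⊆ edgesWithin G W) (hx : x ∈ W) :
    kcomp (component A W x) (edgesIn A (component A W x)) = 1 := by
  rw [kcomp_eq_card_image_component (edgesIn_subset_edgesWithin hA _),
    image_congr fun w hw => component_edgesIn_component hA hx hw,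
    image_const ⟨x, self_mem_component hx⟩, card_singleton]

lemma kcomp_eq_one_add (hA : A ⊆ edgesWithin G W) (hx : x ∈ W) :
    kcomp W A = 1 + kcomp (W \ component A W x) (edgesIn A (W \ component A W x)) := by
  set S := component A W x
  have hS : S.image (component A W) = {S} := by
    rw [image_congr fun w hw => component_eq_of_linked (mem_component.1 hw).2,
      image_const ⟨x, self_mem_component hx⟩]
  have hW : W.image (component A W) = insert S ((W \ S).image (component A W)) := by
    rw [insert_eq, ← hS, ← image_union, union_sdiff_of_subset component_subset]
  have hS_notMem : S ∉ (W \ S).image (component A W) := by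
    intro h
    obtain ⟨w, hw, hwS⟩ := mem_image.1 h
    exact (mem_sdiff.1 hw).2 (hwS ▸ self_mem_component (mem_sdiff.1 hw).1)
  rw [kcomp_eq_card_image_component hA,
    kcomp_eq_card_image_component (edgesIn_subset_edgesWithin hA _),
    image_congr fun w hw => component_edgesIn_sdiff hA hw, hW, card_insert_of_notMem hS_notMem,
    add_comm]

lemma linked_of_kcomp_eq_one (hB : B ⊆ edgesWithin G S) (hBS : kcomp S B = 1) {a b : V}
    (ha : a ∈ S) (hb : b ∈ S) : Linked B a b := by
  rw [kcomp_eq_card_image_component hB] at hBS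
  have hab := card_le_one.1 hBS.le _ (mem_image_of_mem _ ha) _ (mem_image_of_mem _ hb)
  exact (mem_component.1 (hab ▸ self_mem_component hb)).2

lemma component_union_eq (hB : B ⊆ edgesWithin G S) (hBS : kcomp S B = 1)
    (hA : A ⊆ edgesWithin G (W \ S)) (hx : x ∈ S) (hSW : S ⊆ W) : component (B ∪ A) W x = S := by
  have hclosed : ∀ a b, s(a, b) ∈ B ∪ A → a ∈ S → b ∈ S := by
    intro a b he ha
    rcases mem_union.1 he with he | he
    · exact mem_of_mem_edgesWithin (hB he) (Sym2.mem_mk_right a b)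
    · exact absurd ha (mem_sdiff.1 (mem_of_mem_edgesWithin (hA he) (Sym2.mem_mk_left a b))).2
  exact subset_antisymm (fun y hy => (Linked.of_closed hclosed hx (mem_component.1 hy).2).1)
    fun y hy =>
      mem_component.2 ⟨hSW hy, (linked_of_kcomp_eq_one hB hBS hx hy).mono subset_union_left⟩

end Splitting

section Recursion

variable {V : Type*} [Fintype V] [DecidableEq V] {R : Type*} [CommRing R]
  (G : SimpleGraph V) [DecidableRel G.Adj] (v : Sym2 V → R) {W S : Finset V} {x : V}

lemma sum_component_eq (hx : x ∈ S) (hSW : S ⊆ W) (φ : ℕ → R) :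
    ∑ A ∈ (edgesWithin G W).powerset with component A W x = S, φ (kcomp W A) * ∏ e ∈ A, v e
      = Cmv G S v * ∑ A ∈ (edgesWithin G (W \ S)).powerset,
          φ (1 + kcomp (W \ S) A) * ∏ e ∈ A, v e := by
  -- `A` splits into a connected edge set on `S` and an arbitrary edge set on `W \ S`
  rw [Cmv, sum_mul_sum, ← sum_product']
  refine sum_bij' (fun A _ => (edgesIn A S, edgesIn A (W \ S))) (fun p _ => p.1 ∪ p.2)
    ?_ ?_ ?_ ?_ ?_
  · intro A hA
    simp only [mem_filter, mem_powerset] at hA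
    obtain ⟨hA, rfl⟩ := hA
    simp only [mem_product, mem_filter, mem_powerset]
    exact ⟨⟨edgesIn_subset_edgesWithin hA _, kcomp_edgesIn_component hA (hSW hx)⟩,
      edgesIn_subset_edgesWithin hA _⟩
  · rintro ⟨B, A⟩ hp
    simp only [mem_product, mem_filter, mem_powerset] at hp ⊢
    obtain ⟨⟨hB, hBS⟩, hA⟩ := hp
    exact ⟨union_subset (hB.trans (edgesWithin_mono hSW))
        (hA.trans (edgesWithin_mono sdiff_subset)),
      component_union_eq hB hBS hA hx hSW⟩
  · intro A hA
    simp only [mem_filter, mem_powerset] at hA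
    obtain ⟨hA, rfl⟩ := hA
    exact edgesIn_component_union_edgesIn_sdiff hA
  · rintro ⟨B, A⟩ hp
    simp only [mem_product, mem_filter, mem_powerset] at hp
    obtain ⟨⟨hB, -⟩, hA⟩ := hp
    rw [edgesIn_union, edgesIn_union, edgesIn_eq_self hB, edgesIn_eq_self hA,
      edgesIn_eq_empty hA disjoint_sdiff, edgesIn_eq_empty hB sdiff_disjoint, union_empty,
      empty_union]
  · intro A hA
    simp only [mem_filter, mem_powerset] at hA
    obtain ⟨hA, rfl⟩ := hA
    rw [kcomp_eq_one_add hA (hSW hx), mul_left_comm,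
      ← prod_union (disjoint_edgesIn disjoint_sdiff), edgesIn_component_union_edgesIn_sdiff hA]

lemma sum_powerset_edgesWithin_eq (hx : x ∈ W) (φ : ℕ → R) :
    ∑ A ∈ (edgesWithin G W).powerset, φ (kcomp W A) * ∏ e ∈ A, v e
      = ∑ S ∈ W.powerset with x ∈ S, Cmv G S v *
          ∑ A ∈ (edgesWithin G (W \ S)).powerset, φ (1 + kcomp (W \ S) A) * ∏ e ∈ A, v e := by
  rw [← sum_fiberwise_of_maps_to (g := fun A => component A W x) (t := {S ∈ W.powerset | x ∈ S})
    fun A _ => mem_filter.2 ⟨mem_powerset.2 component_subset, self_mem_component hx⟩]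
  refine sum_congr rfl fun S hS => ?_
  simp only [mem_filter, mem_powerset] at hS
  exact sum_component_eq G v hS.2 hS.1 φ

lemma Zmv_eq_sum (hx : x ∈ W) (q : R) :
    Zmv G W q v = ∑ S ∈ W.powerset with x ∈ S, q * Cmv G S v * Zmv G (W \ S) q v := by
  simp only [Zmv, sum_powerset_edgesWithin_eq G v hx, mul_sum, pow_add, pow_one]
  exact sum_congr rfl fun _ _ => sum_congr rfl fun _ _ => by ring

lemma ZhatMv_eq_sum (hx : x ∈ W) (q : R) :
    ZhatMv G W q v = ∑ S ∈ W.powerset with x ∈ S, Cmv G S v * Zmv G (W \ S) q v := by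
  rw [ZhatMv, sum_powerset_edgesWithin_eq G v hx fun k => q ^ (k - 1)]
  simp only [Zmv, Nat.add_sub_cancel_left]

lemma Zmv_eq_mul_ZhatMv (hx : x ∈ W) (q : R) : Zmv G W q v = q * ZhatMv G W q v := by
  simp only [Zmv_eq_sum G v hx, ZhatMv_eq_sum G v hx, mul_sum, mul_assoc]

lemma Zmv_empty (q : R) : Zmv G ∅ q v = 1 := by
  have hE : edgesWithin G (∅ : Finset V) = ∅ :=
    subset_empty.1 fun e he => by
      induction e with
      | _ a b => exact absurd (mem_of_mem_edgesWithin he (Sym2.mem_mk_left a b)) (notMem_empty a)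
  have hk : kcomp (∅ : Finset V) ∅ = 0 := by
    simp [kcomp]
  rw [Zmv, hE, powerset_empty, sum_singleton, hk, pow_zero, prod_empty, mul_one]

end Recursion

section Convolution

variable {V : Type*} [Fintype V] [DecidableEq V] {R : Type*} [CommRing R]
  (G : SimpleGraph V) [DecidableRel G.Adj] (v : Sym2 V → R)

lemma Zmv_add (M : Finset V) (a b : R) :
    Zmv G M (a + b) v = ∑ U ∈ M.powerset, Zmv G U a v * Zmv G (M \ U) b v := by
  induction M using Finset.strongInduction generalizing a b with
  | H M ih =>
  rcases M.eq_empty_or_nonempty with rfl | ⟨x, hx⟩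
  · simp [Zmv_empty]
  have hx_side : ∀ a b : R, ∑ U ∈ M.powerset with x ∈ U, Zmv G U a v * Zmv G (M \ U) b v
      = ∑ S ∈ M.powerset with x ∈ S, a * Cmv G S v * Zmv G (M \ S) (a + b) v := by
    intro a b
    calc _ = ∑ U ∈ M.powerset with x ∈ U, ∑ S ∈ U.powerset with x ∈ S,
            a * Cmv G S v * Zmv G (U \ S) a v * Zmv G (M \ U) b v :=
          sum_congr rfl fun U hU => by rw [Zmv_eq_sum G v (mem_filter.1 hU).2, sum_mul]
      _ = ∑ S ∈ M.powerset with x ∈ S, ∑ T ∈ (M \ S).powerset,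
            a * Cmv G S v * Zmv G T a v * Zmv G ((M \ S) \ T) b v :=
          sum_powerset_mem_sum_powerset_mem fun S T T' => a * Cmv G S v * Zmv G T a v * Zmv G T' b v
      _ = _ := sum_congr rfl fun S hS => by
          rw [ih _ (sdiff_ssubset (mem_powerset.1 (mem_filter.1 hS).1) ⟨x, (mem_filter.1 hS).2⟩),
            mul_sum]
          exact sum_congr rfl fun _ _ => by ring
  -- the terms with `x ∉ U` are those with `x ∈ U` for the pair `(b, a)`
  rw [← sum_filter_add_sum_filter_not _ (x ∈ ·),
    sum_powerset_notMem_eq hx fun U U' => Zmv G U a v * Zmv G U' b v]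
  simp only [mul_comm (Zmv G (M \ _) a v)]
  rw [hx_side, hx_side, add_comm b a, ← sum_add_distrib, Zmv_eq_sum G v hx]
  exact sum_congr rfl fun _ _ => by ring

lemma ZhatMv_add {M : Finset V} {x : V} (hx : x ∈ M) (a b : R) :
    ZhatMv G M (a + b) v = ∑ S ∈ M.powerset with x ∈ S, ZhatMv G S a v * Zmv G (M \ S) b v := by
  calc _ = ∑ T ∈ M.powerset with x ∈ T, ∑ U ∈ (M \ T).powerset,
          Cmv G T v * Zmv G U a v * Zmv G ((M \ T) \ U) b v := by
        rw [ZhatMv_eq_sum G v hx]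
        exact sum_congr rfl fun T _ => by simp only [Zmv_add, mul_sum, mul_assoc]
    _ = ∑ S ∈ M.powerset with x ∈ S, ∑ T ∈ S.powerset with x ∈ T,
          Cmv G T v * Zmv G (S \ T) a v * Zmv G (M \ S) b v :=
        (sum_powerset_mem_sum_powerset_mem fun T U U' =>
          Cmv G T v * Zmv G U a v * Zmv G U' b v).symm
    _ = _ := sum_congr rfl fun S hS => by rw [ZhatMv_eq_sum G v (mem_filter.1 hS).2, sum_mul]

end Convolution

section PartitionExpansion

variable {V : Type*} [Fintype V] [DecidableEq V] {R : Type*} [CommRing R]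
  (G : SimpleGraph V) [DecidableRel G.Adj] (v : Sym2 V → R)

theorem sum_finpartition_fallingProd_mul_prod_ZhatMv (q1 : R) (M : Finset V) (q : R) :
    ∑ π : Finpartition M, fallingProd q q1 #π.parts * ∏ B ∈ π.parts, ZhatMv G B q1 v
      = Zmv G M q v := by
  induction M using Finset.strongInduction generalizing q with
  | H M ih =>
  rcases M.eq_empty_or_nonempty with rfl | ⟨x, hx⟩
  · have : Unique (Finpartition (∅ : Finset V)) :=
      inferInstanceAs (Unique (Finpartition (⊥ : Finset V)))
    rw [Fintype.sum_unique, Finpartition.parts_eq_empty_iff.2 rfl, card_empty, fallingProd_zero,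
      prod_empty, mul_one, Zmv_empty]
  calc _ = ∑ S ∈ M.powerset with x ∈ S, ZhatMv G S q1 v * (q * Zmv G (M \ S) (q - q1) v) := by
        rw [sum_finpartition_eq_sum_part hx]
        refine sum_congr rfl fun S hS => ?_
        obtain ⟨hSM, hxS⟩ := mem_filter.1 hS
        simp only [fallingProd_succ, mul_assoc, ← mul_sum,
          ih _ (sdiff_ssubset (mem_powerset.1 hSM) ⟨x, hxS⟩)]
    _ = q * ZhatMv G M (q1 + (q - q1)) v := by
        rw [ZhatMv_add G v hx, mul_sum]
        exact sum_congr rfl fun _ _ => by ring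
    _ = Zmv G M q v := by rw [add_sub_cancel, Zmv_eq_mul_ZhatMv G v hx]

end PartitionExpansion

theorem stmt7 {V : Type*} [Fintype V] [DecidableEq V] [Nonempty V] {R : Type*} [CommRing R]
    (G : SimpleGraph V) [DecidableRel G.Adj] (v : Sym2 V → R) (q1 q2 : R) :
    ZhatMv G Finset.univ q2 v
      = ∑ π : Finpartition (Finset.univ : Finset V),
          (∏ j ∈ Finset.Icc 1 (π.parts.card - 1), (q2 - (j : R) * q1)) *
            ∏ B ∈ π.parts, ZhatMv G B q1 v := by
  obtain ⟨x⟩ := ‹Nonempty V›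
  have hx := mem_univ x
  calc ZhatMv G univ q2 v = ZhatMv G univ (q1 + (q2 - q1)) v := by rw [add_sub_cancel]
    _ = _ := by
      rw [ZhatMv_add G v hx,
        sum_finpartition_eq_sum_part hx fun n => ∏ j ∈ Icc 1 (n - 1), (q2 - (j : R) * q1)]
      refine sum_congr rfl fun S _ => ?_
      simp only [Nat.add_sub_cancel, prod_Icc_one_eq_fallingProd,
        sum_finpartition_fallingProd_mul_prod_ZhatMv]
end

section
/- Let G = (V,E) be a finite simple graph with V nonempty, let R be a commutative ring, and let v : E → R be edge weights. Then C_G(v) = Σ_{π ∈ Π(V)} (-1)^{|π|-1} · (|π|-1)! · ∏_{B ∈ π} ∏_{e ∈ E(G[B])} (1 + v_e), where C_G(v) = Σ_{A ⊆ E : (V,A) connected} ∏_{e∈A} v_e, the sum runs over all partitions π of V into nonempty blocks, |π| is the number of blocks, and E(G[B]) is the edge set of the induced subgraph of G on block B. -/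
open Finset SimpleGraph

/-!
Expanding `∏_{B ∈ π} ∏_{e ∈ E(G[B])} (1 + v_e)` gives the sum of `∏_{e ∈ A} v_e` over the edge
sets `A` whose connected components refine `π`. Exchanging the sums, the coefficient of
`∏_{e ∈ A} v_e` becomes `∑_{π ≥ σ} μ(π, 1̂)`, where `σ` is the partition into the components of
`A`, and this is `1` if `σ` has a single block and `0` otherwise. For the vanishing, fix a block
`b` of `σ` and group the coarsenings `π` of `σ` by their restriction `π'` to `V \ b`: in `π`, the
set `b` is either a block of its own or merged into one of the `m = |π'|` blocks of `π'`, so each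
group contributes `μ(m + 1) + m μ(m) = 0`.
-/

/-- The Möbius function `μ(π, 1̂)` of the partition lattice, for a partition `π` with `n` parts. -/
def partitionMobius (R : Type*) [CommRing R] (n : ℕ) : R := (-1) ^ (n - 1) * (n - 1).factorial

lemma partitionMobius_succ_add_nsmul (R : Type*) [CommRing R] {m : ℕ} (hm : m ≠ 0) :
    partitionMobius R (m + 1) + m • partitionMobius R m = 0 := by
  obtain ⟨n, rfl⟩ := Nat.exists_eq_succ_of_ne_zero hm
  simp only [partitionMobius, Nat.succ_sub_one, Nat.factorial_succ, pow_succ,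
    nsmul_eq_mul, Nat.cast_mul, Nat.cast_succ]
  ring

namespace Finpartition

variable {α : Type*} [DecidableEq α] {s b : Finset α}

lemma avoid_parts_of_mem_s10 (P : Finpartition s) (hb : b ∈ P.parts) :
    (P.avoid b).parts = P.parts.erase b := by
  ext c
  rw [mem_avoid, mem_erase]
  constructor
  · rintro ⟨d, hd, hdb, rfl⟩
    have hne : d ≠ b := by rintro rfl; exact hdb le_rfl
    have hdisj : Disjoint d b := P.disjoint hd hb hne
    rw [sdiff_eq_self_of_disjoint hdisj]
    exact ⟨hne, hd⟩
  · rintro ⟨hne, hc⟩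
    have hdisj : Disjoint c b := P.disjoint hc hb hne
    refine ⟨c, hc, fun hcb => P.ne_bot hc ?_, sdiff_eq_self_of_disjoint hdisj⟩
    exact hdisj.eq_bot_of_le hcb

lemma avoid_parts_of_ssubset (P : Finpartition s) {C : Finset α} (hC : C ∈ P.parts)
    (hbC : b ⊂ C) : (P.avoid b).parts = insert (C \ b) (P.parts.erase C) := by
  have hdisj : ∀ d ∈ P.parts, d ≠ C → Disjoint d b := fun d hd hne =>
    (P.disjoint hd hC hne).mono_right hbC.subset
  ext c
  rw [mem_avoid, mem_insert, mem_erase]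
  constructor
  · rintro ⟨d, hd, hdb, rfl⟩
    by_cases hdC : d = C
    · exact .inl (hdC ▸ rfl)
    · rw [sdiff_eq_self_of_disjoint (hdisj d hd hdC)]
      exact .inr ⟨hdC, hd⟩
  · rintro (rfl | ⟨hne, hc⟩)
    · exact ⟨C, hC, hbC.not_subset, rfl⟩
    · refine ⟨c, hc, fun hcb => P.ne_bot hc ?_, sdiff_eq_self_of_disjoint (hdisj c hc hne)⟩
      exact (hdisj c hc hne).eq_bot_of_le hcb

lemma avoid_mono {P Q : Finpartition s} (h : P ≤ Q) (b : Finset α) : P.avoid b ≤ Q.avoid b := by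
  intro x hx
  obtain ⟨d, hd, hdb, rfl⟩ := (mem_avoid _).1 hx
  obtain ⟨c, hc, hdc⟩ := h hd
  exact ⟨c \ b, (mem_avoid _).2 ⟨c, hc, fun hcb => hdb (hdc.trans hcb), rfl⟩,
    sdiff_le_sdiff_right hdc⟩

lemma le_iff_of_mem_parts {σ π : Finpartition s} (hb : b ∈ σ.parts) :
    σ ≤ π ↔ (∃ C ∈ π.parts, b ⊆ C) ∧ σ.avoid b ≤ π.avoid b := by
  refine ⟨fun h => ⟨h hb, avoid_mono h b⟩, fun ⟨⟨C, hC, hbC⟩, h⟩ p hp => ?_⟩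
  by_cases hpb : p = b
  · exact ⟨C, hC, hpb ▸ hbC⟩
  · have hp' : p ∈ (σ.avoid b).parts := by
      rw [avoid_parts_of_mem_s10 σ hb]; exact mem_erase.2 ⟨hpb, hp⟩
    obtain ⟨c, hc, hpc⟩ := h hp'
    obtain ⟨d, hd, -, rfl⟩ := (mem_avoid _).1 hc
    exact ⟨d, hd, hpc.trans sdiff_le⟩

lemma not_subset_of_mem_parts_sdiff (P : Finpartition (s \ b)) (hb : b.Nonempty)
    {c : Finset α} (hc : c ∈ P.parts) : ¬b ⊆ c := fun hbc =>
  hb.ne_empty (disjoint_self.1 ((sdiff_disjoint.mono_left (P.le hc)).mono_left hbc))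

section Adjoin

variable (hbs : b ⊆ s) (hb : b.Nonempty)

/-- Partitions of `s` restricting to `P` on `s \ b` in which `b` lies inside one part: either `b`
is a new part (`none`), or it is merged into the part `c` of `P` (`some c`). -/
def adjoin (P : Finpartition (s \ b)) : Option P.parts → Finpartition s
  | none => P.extend (b := b) (by simpa using hb.ne_empty) sdiff_disjoint
      (by rw [sup_eq_union, sdiff_union_of_subset hbs])
  | some c => (P.avoid c).extend (b := c.1 ∪ b)
      (by simpa using (hb.mono subset_union_right).ne_empty)
      (disjoint_union_right.2 ⟨sdiff_disjoint, sdiff_disjoint.mono_left sdiff_le⟩)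
      (by rw [sup_eq_union, ← union_assoc, sdiff_union_of_subset (P.le c.2),
        sdiff_union_of_subset hbs])

variable (P : Finpartition (s \ b))

lemma adjoin_none_parts : (P.adjoin hbs hb none).parts = insert b P.parts := rfl

lemma adjoin_some_parts (c : P.parts) :
    (P.adjoin hbs hb (some c)).parts = insert (c.1 ∪ b) (P.parts.erase c) := by
  rw [adjoin, extend_parts, avoid_parts_of_mem_s10 P c.2]

lemma card_adjoin_none : #(P.adjoin hbs hb none).parts = #P.parts + 1 :=
  card_insert_of_notMem fun h => P.not_subset_of_mem_parts_sdiff hb h subset_rfl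

lemma card_adjoin_some (c : P.parts) : #(P.adjoin hbs hb (some c)).parts = #P.parts := by
  rw [adjoin_some_parts, card_insert_of_notMem
    fun h => P.not_subset_of_mem_parts_sdiff hb (mem_of_mem_erase h) subset_union_right,
    card_erase_of_mem c.2]
  have : 0 < #P.parts := card_pos.2 ⟨_, c.2⟩
  omega

lemma adjoin_injective : Function.Injective (P.adjoin hbs hb) := by
  rintro (_ | ⟨c₁, hc₁⟩) (_ | ⟨c₂, hc₂⟩) h
  · rfl
  · simpa [card_adjoin_none, card_adjoin_some] using congrArg (#·.parts) h
  · simpa [card_adjoin_none, card_adjoin_some] using congrArg (#·.parts) h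
  · have h₁ : c₁ ∪ b ∈ (P.adjoin hbs hb (some ⟨c₂, hc₂⟩)).parts := by
      rw [← h, adjoin_some_parts]; exact mem_insert_self _ _
    have h₂ : c₂ ∪ b ∈ (P.adjoin hbs hb (some ⟨c₂, hc₂⟩)).parts := by
      rw [adjoin_some_parts]; exact mem_insert_self _ _
    obtain ⟨x, hx⟩ := hb
    have hunion := eq_of_mem_parts _ h₁ h₂ (mem_union_right _ hx) (mem_union_right _ hx)
    obtain rfl : c₁ = c₂ := by
      rw [← union_sdiff_cancel_right (sdiff_disjoint.mono_left (P.le hc₁)),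
        ← union_sdiff_cancel_right (sdiff_disjoint.mono_left (P.le hc₂)) (s := c₂), hunion]
    rfl

lemma exists_adjoin_eq_iff (π : Finpartition s) :
    (∃ o, P.adjoin hbs hb o = π) ↔ (∃ C ∈ π.parts, b ⊆ C) ∧ π.avoid b = P := by
  constructor
  · rintro ⟨_ | ⟨c, hc⟩, rfl⟩
    · have hmem : b ∈ (P.adjoin hbs hb none).parts := mem_insert_self _ _
      refine ⟨⟨b, hmem, subset_rfl⟩, Finpartition.ext ?_⟩
      rw [avoid_parts_of_mem_s10 _ hmem, adjoin_none_parts,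
        erase_insert fun h => P.not_subset_of_mem_parts_sdiff hb h subset_rfl]
    · have hmem : c ∪ b ∈ (P.adjoin hbs hb (some ⟨c, hc⟩)).parts := by
        rw [adjoin_some_parts]; exact mem_insert_self _ _
      have hdisj : Disjoint c b := sdiff_disjoint.mono_left (P.le hc)
      have hssub : b ⊂ c ∪ b := Finset.ssubset_iff_subset_ne.2 ⟨subset_union_right, fun h =>
        (P.nonempty_of_mem_parts hc).ne_empty (disjoint_self.1 (hdisj.mono_right
          (h ▸ subset_union_left)))⟩
      refine ⟨⟨c ∪ b, hmem, subset_union_right⟩, Finpartition.ext ?_⟩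
      rw [avoid_parts_of_ssubset _ hmem hssub, adjoin_some_parts,
        erase_insert fun h => P.not_subset_of_mem_parts_sdiff hb (mem_of_mem_erase h)
          subset_union_right,
        union_sdiff_cancel_right hdisj, insert_erase hc]
  · rintro ⟨⟨C, hC, hbC⟩, rfl⟩
    by_cases hCb : C = b
    · subst hCb
      exact ⟨none, Finpartition.ext (by
        rw [adjoin_none_parts, avoid_parts_of_mem_s10 _ hC, insert_erase hC])⟩
    have hssub : b ⊂ C := Finset.ssubset_iff_subset_ne.2 ⟨hbC, Ne.symm hCb⟩
    have hc : C \ b ∈ (π.avoid b).parts := by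
      rw [avoid_parts_of_ssubset _ hC hssub]; exact mem_insert_self _ _
    have hnotMem : C \ b ∉ π.parts.erase C := fun h =>
      (sdiff_nonempty.2 hssub.not_subset).ne_empty (disjoint_self.1
        ((π.disjoint (mem_of_mem_erase h) hC (ne_of_mem_erase h)).mono_right sdiff_le))
    refine ⟨some ⟨C \ b, hc⟩, Finpartition.ext ?_⟩
    rw [adjoin_some_parts]
    change insert (C \ b ∪ b) ((π.avoid b).parts.erase (C \ b)) = π.parts
    rw [avoid_parts_of_ssubset _ hC hssub, erase_insert hnotMem,
      sdiff_union_of_subset hbC, insert_erase hC]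

lemma sum_adjoin {M : Type*} [AddCommMonoid M] (f : ℕ → M) :
    ∑ o, f (#(P.adjoin hbs hb o).parts) = f (#P.parts + 1) + #P.parts • f #P.parts := by
  simp only [Fintype.sum_option, card_adjoin_none, card_adjoin_some, sum_const, card_univ,
    Fintype.card_coe]

end Adjoin

lemma card_parts_pos (hs : s.Nonempty) (P : Finpartition s) : 0 < #P.parts :=
  card_pos.2 (P.parts_nonempty (by simpa using hs.ne_empty))

lemma parts_eq_singleton_of_card_eq_one {P : Finpartition s} (h : #P.parts = 1) :
    P.parts = {s} := by
  obtain ⟨c, hc⟩ := card_eq_one.1 h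
  have hsup := P.sup_parts
  rw [hc, sup_singleton, id] at hsup
  rw [hc, hsup]

lemma eq_of_le_of_card_parts_eq_one (hs : s.Nonempty) {σ π : Finpartition s}
    (hσ : #σ.parts = 1) (h : σ ≤ π) : π = σ :=
  Finpartition.ext <| by
    rw [parts_eq_singleton_of_card_eq_one hσ, parts_eq_singleton_of_card_eq_one
      (le_antisymm (hσ ▸ card_mono h) (card_parts_pos hs π))]

open Classical in
theorem sum_partitionMobius_of_le (R : Type*) [CommRing R] (hs : s.Nonempty)
    (σ : Finpartition s) :
    ∑ π with σ ≤ π, partitionMobius R #π.parts = if #σ.parts = 1 then 1 else 0 := by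
  split_ifs with hσ
  · have htop : ({π | σ ≤ π} : Finset (Finpartition s)) = {σ} := by
      ext π
      simpa using ⟨eq_of_le_of_card_parts_eq_one hs hσ, fun h => h ▸ le_rfl⟩
    simp [htop, hσ, partitionMobius]
  have hσ' : 1 < #σ.parts := by have := card_parts_pos hs σ; omega
  obtain ⟨b, hb, b', hb', hbb'⟩ := one_lt_card.1 hσ'
  have hbs : b ⊆ s := σ.le hb
  have hbne : b.Nonempty := σ.nonempty_of_mem_parts hb
  have hrest : (s \ b).Nonempty := by
    obtain ⟨x, hx⟩ := σ.nonempty_of_mem_parts hb'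
    exact ⟨x, mem_sdiff.2 ⟨σ.le hb' hx,
      disjoint_left.1 (σ.disjoint hb' hb hbb'.symm : Disjoint b' b) hx⟩⟩
  rw [← sum_fiberwise_of_maps_to (g := (·.avoid b)) (t := {π' | σ.avoid b ≤ π'})
    fun π hπ => by simpa using avoid_mono (mem_filter.1 hπ).2 b]
  refine sum_eq_zero fun π' hπ' => ?_
  have hfiber : ({π ∈ {π | σ ≤ π} | π.avoid b = π'} : Finset (Finpartition s)) =
      univ.image (π'.adjoin hbs hbne) := by
    ext π
    simp only [mem_filter, mem_univ, true_and, mem_image, exists_adjoin_eq_iff,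
      le_iff_of_mem_parts hb] at hπ' ⊢
    constructor
    · rintro ⟨⟨hC, -⟩, rfl⟩; exact ⟨hC, rfl⟩
    · rintro ⟨hC, rfl⟩; exact ⟨⟨hC, hπ'⟩, rfl⟩
  rw [hfiber, sum_image fun _ _ _ _ h => adjoin_injective hbs hbne π' h, sum_adjoin,
    partitionMobius_succ_add_nsmul R (card_parts_pos hrest π').ne']

lemma card_parts_ofSetoid [Fintype α] (r : Setoid α) [DecidableRel r.r] :
    #(ofSetoid r).parts = Fintype.card (Quotient r) := by
  let block : Quotient r → Finset α :=
    Quotient.lift (fun a => ({b ∈ univ | r a b} : Finset α)) fun a a' h => by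
      ext b; simpa using ⟨r.trans (r.symm h), r.trans h⟩
  have hinj : block.Injective := by
    refine Quotient.ind₂ fun a a' h => Quotient.sound ?_
    have : a' ∈ block ⟦a⟧ := h ▸ by simp [block]
    simpa [block] using this
  rw [ofSetoid, ofSetSetoid_parts,
    show (fun a => ({b ∈ univ | r a b} : Finset α)) = block ∘ Quotient.mk r from rfl,
    ← image_image, image_univ_of_surjective Quotient.mk_surjective,
    card_image_of_injective _ hinj, card_univ]

end Finpartition

namespace SimpleGraph

variable {V : Type*} [Fintype V] [DecidableEq V]

open Classical in
noncomputable def componentPartition (A : Finset (Sym2 V)) : Finpartition (univ : Finset V) :=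
  Finpartition.ofSetoid (fromEdgeSet (A : Set (Sym2 V))).reachableSetoid

lemma mem_part_componentPartition {A : Finset (Sym2 V)} {a b : V} :
    b ∈ (componentPartition A).part a ↔ (fromEdgeSet (A : Set (Sym2 V))).Reachable a b := by
  classical
  exact Finpartition.mem_part_ofSetoid_iff_rel

lemma card_parts_componentPartition (A : Finset (Sym2 V)) :
    #(componentPartition A).parts = kcomp univ A := by
  classical
  rw [componentPartition, Finpartition.card_parts_ofSetoid, kcomp, coe_univ,
    ← Nat.card_eq_fintype_card]
  exact Nat.card_congr (induceUnivIso _).connectedComponentEquiv.symm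

variable (G : SimpleGraph V) [DecidableRel G.Adj]

lemma part_eq_of_reachable {π : Finpartition (univ : Finset V)} {A : Finset (Sym2 V)}
    (hA : A ⊆ π.parts.biUnion (edgesWithin G)) {x y : V}
    (h : (fromEdgeSet (A : Set (Sym2 V))).Reachable x y) : π.part x = π.part y := by
  obtain ⟨w⟩ := h
  induction w with
  | nil => rfl
  | @cons x y z hxy _ ih =>
    obtain ⟨B, hB, he⟩ := mem_biUnion.1 (hA ((fromEdgeSet_adj _).1 hxy).1)
    have hxyB : ∀ u ∈ s(x, y), u ∈ B := (mem_filter.1 he).2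
    rw [π.part_eq_of_mem hB (hxyB x (Sym2.mem_mk_left x y)),
      ← π.part_eq_of_mem hB (hxyB y (Sym2.mem_mk_right x y)), ih]

lemma componentPartition_le_iff {A : Finset (Sym2 V)} (hA : A ⊆ G.edgeFinset)
    (π : Finpartition (univ : Finset V)) :
    componentPartition A ≤ π ↔ A ⊆ π.parts.biUnion (edgesWithin G) := by
  constructor
  · intro h e he
    induction e using Sym2.ind with | _ x y =>
    have hxy : (fromEdgeSet (A : Set (Sym2 V))).Adj x y :=
      (fromEdgeSet_adj _).2 ⟨he, (mem_edgeFinset.1 (hA he)).ne⟩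
    obtain ⟨B, hB, hsub⟩ := h ((componentPartition A).part_mem.2 (mem_univ x))
    refine mem_biUnion.2 ⟨B, hB, mem_filter.2 ⟨hA he, fun u hu => hsub ?_⟩⟩
    rcases Sym2.mem_iff.1 hu with rfl | rfl
    · exact mem_part_componentPartition.2 (Reachable.refl u)
    · exact mem_part_componentPartition.2 hxy.reachable
  · intro h p hp
    obtain ⟨a, ha⟩ := (componentPartition A).nonempty_of_mem_parts hp
    refine ⟨π.part a, π.part_mem.2 (mem_univ a), fun b hb => ?_⟩
    rw [← (componentPartition A).part_eq_of_mem hp ha, mem_part_componentPartition] at hb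
    rw [part_eq_of_reachable G h hb]
    exact π.mem_part (mem_univ b)

open Classical in
lemma prod_prod_edgesWithin_one_add {R : Type*} [CommRing R] (v : Sym2 V → R)
    (π : Finpartition (univ : Finset V)) :
    ∏ B ∈ π.parts, ∏ e ∈ edgesWithin G B, (1 + v e) =
      ∑ A ∈ G.edgeFinset.powerset, if componentPartition A ≤ π then ∏ e ∈ A, v e else 0 := by
  have hdisj : (π.parts : Set (Finset V)).PairwiseDisjoint (edgesWithin G) := by
    intro B hB B' hB' hne
    rw [Function.onFun, Finset.disjoint_left]
    refine fun e he he' => hne ?_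
    exact π.eq_of_mem_parts hB hB' ((mem_filter.1 he).2 _ e.out_fst_mem)
      ((mem_filter.1 he').2 _ e.out_fst_mem)
  have hsub : π.parts.biUnion (edgesWithin G) ⊆ G.edgeFinset :=
    biUnion_subset.2 fun _ _ => filter_subset _ _
  rw [← prod_biUnion hdisj, prod_one_add, ← sum_filter]
  refine sum_congr (ext fun A => ?_) fun _ _ => rfl
  simp only [mem_powerset, mem_filter]
  exact ⟨fun h => ⟨h.trans hsub, (componentPartition_le_iff G (h.trans hsub) π).2 h⟩,
    fun h => (componentPartition_le_iff G h.1 π).1 h.2⟩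

end SimpleGraph

theorem stmt10 {V : Type*} [Fintype V] [DecidableEq V] [Nonempty V] {R : Type*} [CommRing R]
    (G : SimpleGraph V) [DecidableRel G.Adj] (v : Sym2 V → R) :
    Cmv G Finset.univ v
      = ∑ π : Finpartition (Finset.univ : Finset V),
          (-1 : R) ^ (π.parts.card - 1) * ((π.parts.card - 1).factorial : R) *
            ∏ B ∈ π.parts, ∏ e ∈ edgesWithin G B, (1 + v e) := by
  classical
  have hE : edgesWithin G univ = G.edgeFinset := by simp [edgesWithin]
  calc Cmv G univ v
      = ∑ A ∈ G.edgeFinset.powerset,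
          (∑ π with componentPartition A ≤ π, partitionMobius R #π.parts) * ∏ e ∈ A, v e := by
        rw [Cmv, hE, sum_filter]
        refine sum_congr rfl fun A _ => ?_
        rw [Finpartition.sum_partitionMobius_of_le R univ_nonempty,
          card_parts_componentPartition, ite_mul, one_mul, zero_mul]
    _ = ∑ π, partitionMobius R #π.parts * ∑ A ∈ G.edgeFinset.powerset,
          if componentPartition A ≤ π then ∏ e ∈ A, v e else 0 := by
        simp_rw [sum_mul, mul_sum, sum_filter, mul_ite, mul_zero]
        exact sum_comm
    _ = _ := by simp only [prod_prod_edgesWithin_one_add, partitionMobius]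
end

section
/- Let G = (V,E) be a finite simple graph, let R be a commutative ring, let v : E → R be edge weights, and let q1, q2 ∈ R. Then Z_G(q1 + q2, v) = Σ_{W ⊆ V} Z_{G[W]}(q1, v) · Z_{G[V∖W]}(q2, v), where the sum runs over all subsets W of V and G[W], G[V∖W] denote the induced subgraphs of G on W and its complement (with the restricted edge weights). -/
open Finset SimpleGraph

/-! Expanding `(q₁ + q₂) ^ k(A)` as a product over the components of `(V, A)` colours each
component by `q₁` or `q₂`. The union `W` of the `q₁`-components is a vertex set that no edge of
`A` crosses, and conversely every such `W` arises from exactly one colouring; the components of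
`A` inside `W` and inside `V \ W` are then exactly the coloured ones. After exchanging the sums
over `A` and `W`, the edge sets not crossing a fixed `W` are the disjoint unions `A₁ ∪ A₂` with
`A₁ ⊆ E(G[W])` and `A₂ ⊆ E(G[V \ W])`, and the summand factors accordingly. -/

theorem Finset.sum_powerset_union_of_disjoint {α M : Type*} [DecidableEq α] [AddCommMonoid M]
    {s t : Finset α} (hst : Disjoint s t) (f : Finset α → M) :
    ∑ A ∈ (s ∪ t).powerset, f A = ∑ A ∈ s.powerset, ∑ B ∈ t.powerset, f (A ∪ B) := by
  rw [← sum_product']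
  refine sum_nbij' (fun A => (A ∩ s, A ∩ t)) (fun p => p.1 ∪ p.2) ?_ ?_ ?_ ?_ ?_
  · intro A _
    simp [inter_subset_right]
  · rintro ⟨A, B⟩ h
    simp only [mem_product, mem_powerset] at h ⊢
    exact union_subset_union h.1 h.2
  · intro A hA
    rw [mem_powerset] at hA
    rw [← inter_union_distrib_left, inter_eq_left.2 hA]
  · rintro ⟨A, B⟩ h
    simp only [mem_product, mem_powerset] at h
    have hAt : Disjoint A t := hst.mono_left h.1
    have hBs : Disjoint B s := hst.symm.mono_left h.2
    simp only [union_inter_distrib_right, inter_eq_left.2 h.1, inter_eq_left.2 h.2,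
      disjoint_iff_inter_eq_empty.1 hAt, disjoint_iff_inter_eq_empty.1 hBs, union_empty,
      empty_union]
  · intro A hA
    rw [← inter_union_distrib_left, inter_eq_left.2 (mem_powerset.1 hA)]

section ConnectedComponents

variable {V : Type*} {H : SimpleGraph V}

lemma mem_of_reachable_of_adj_iff {W : Set V} (hW : ∀ x y, H.Adj x y → (x ∈ W ↔ y ∈ W))
    {x y : V} (hxy : H.Reachable x y) (hx : x ∈ W) : y ∈ W := by
  obtain ⟨p⟩ := hxy
  induction p with
  | nil => exact hx
  | cons h _ ih => exact ih ((hW _ _ h).1 hx)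

lemma injective_map_induce_preimage_connectedComponentMk (S : Set H.ConnectedComponent) :
    Function.Injective
      (ConnectedComponent.map
        (Embedding.induce (G := H) (H.connectedComponentMk ⁻¹' S)).toHom) := by
  classical
  refine ConnectedComponent.ind₂ fun a b hab => ?_
  simp only [ConnectedComponent.map_mk] at hab
  obtain ⟨p⟩ := ConnectedComponent.exact hab
  have hp : ∀ z ∈ p.support, z ∈ H.connectedComponentMk ⁻¹' S := fun z hz => by
    have : H.connectedComponentMk z = H.connectedComponentMk a :=
      (ConnectedComponent.sound (p.takeUntil z hz).reachable).symm
    rw [Set.mem_preimage, this]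
    exact a.2
  exact ConnectedComponent.sound (p.induce _ hp).reachable

lemma range_map_induce_preimage_connectedComponentMk (S : Set H.ConnectedComponent) :
    Set.range (ConnectedComponent.map
        (Embedding.induce (G := H) (H.connectedComponentMk ⁻¹' S)).toHom) = S := by
  ext c
  constructor
  · rintro ⟨d, rfl⟩
    induction d using ConnectedComponent.ind with
    | h a => exact a.2
  · intro hc
    obtain ⟨x, rfl⟩ := c.exists_rep
    exact ⟨(H.induce _).connectedComponentMk ⟨x, hc⟩, rfl⟩

lemma card_connectedComponent_induce_preimage_connectedComponentMk
    (S : Set H.ConnectedComponent) :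
    Nat.card (H.induce (H.connectedComponentMk ⁻¹' S)).ConnectedComponent = Nat.card S := by
  rw [← Nat.card_range_of_injective (injective_map_induce_preimage_connectedComponentMk S),
    range_map_induce_preimage_connectedComponentMk]

end ConnectedComponents

def NoCrossingEdge {V : Type*} (A : Finset (Sym2 V)) (W : Finset V) : Prop :=
  ∀ x y, s(x, y) ∈ A → (x ∈ W ↔ y ∈ W)

section Kcomp

variable {V : Type*} [Fintype V] [DecidableEq V]

instance (A : Finset (Sym2 V)) : DecidablePred (NoCrossingEdge A) := fun _ => by
  unfold NoCrossingEdge; infer_instance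

lemma kcomp_congr {W : Finset V} {A B : Finset (Sym2 V)}
    (h : ∀ x y, x ∈ W → y ∈ W → (s(x, y) ∈ A ↔ s(x, y) ∈ B)) :
    kcomp W A = kcomp W B := by
  have : (fromEdgeSet (A : Set (Sym2 V))).induce (W : Set V)
      = (fromEdgeSet (B : Set (Sym2 V))).induce (W : Set V) := by
    ext ⟨x, hx⟩ ⟨y, hy⟩
    simp only [comap_adj, Function.Embedding.coe_subtype, fromEdgeSet_adj, Finset.mem_coe,
      h x y hx hy]
  rw [kcomp, kcomp, this]

lemma kcomp_union_of_forall_not_mem {W : Finset V} {A B : Finset (Sym2 V)}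
    (hB : ∀ e ∈ B, ∀ x ∈ e, x ∉ W) : kcomp W (A ∪ B) = kcomp W A :=
  kcomp_congr fun x y hx _ => by
    rw [mem_union, or_iff_left_iff_imp]
    exact fun h => absurd hx (hB _ h x (Sym2.mem_mk_left x y))

lemma kcomp_filter_connectedComponentMk_mem (A : Finset (Sym2 V))
    [DecidableEq (fromEdgeSet (A : Set (Sym2 V))).ConnectedComponent]
    (t : Finset (fromEdgeSet (A : Set (Sym2 V))).ConnectedComponent) :
    kcomp {x | (fromEdgeSet (A : Set (Sym2 V))).connectedComponentMk x ∈ t} A = #t := by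
  have : (({x | (fromEdgeSet (A : Set (Sym2 V))).connectedComponentMk x ∈ t} : Finset V) : Set V)
      = (fromEdgeSet (A : Set (Sym2 V))).connectedComponentMk ⁻¹' t := by
    ext; simp
  rw [kcomp, this, card_connectedComponent_induce_preimage_connectedComponentMk,
    Nat.card_coe_set_eq, Set.ncard_coe_finset]

lemma add_pow_kcomp_univ {R : Type*} [CommRing R] (A : Finset (Sym2 V)) (q1 q2 : R) :
    (q1 + q2) ^ kcomp univ A =
      ∑ W with NoCrossingEdge A W, q1 ^ kcomp W A * q2 ^ kcomp (univ \ W) A := by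
  set H := fromEdgeSet (A : Set (Sym2 V))
  let := Classical.decEq H.ConnectedComponent
  let P : Finset H.ConnectedComponent → Finset V := fun t => {x | H.connectedComponentMk x ∈ t}
  have hP_card (t) : kcomp (P t) A = #t := kcomp_filter_connectedComponentMk_mem A t
  have hP_univ : P univ = univ := by ext; simp [P]
  have hP_compl (t) : univ \ P t = P tᶜ := by ext; simp [P]
  calc (q1 + q2) ^ kcomp univ A = ∏ _c : H.ConnectedComponent, (q1 + q2) := by
        rw [prod_const, ← hP_univ, hP_card, card_univ]
    _ = ∑ t : Finset H.ConnectedComponent, q1 ^ #t * q2 ^ #tᶜ := by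
        rw [Fintype.prod_add]
        simp only [prod_const]
    _ = ∑ t, q1 ^ kcomp (P t) A * q2 ^ kcomp (univ \ P t) A := by
        simp only [hP_compl, hP_card]
    _ = _ := by
      refine sum_nbij' P (image H.connectedComponentMk) ?_ (by simp) ?_ ?_ (fun _ _ => rfl)
      · refine fun t _ => mem_filter.2 ⟨mem_univ _, fun x y hxy => ?_⟩
        obtain rfl | hne := eq_or_ne x y
        · rfl
        have hadj : H.Adj x y := by simp [H, fromEdgeSet_adj, hxy, hne]
        simp [P, ConnectedComponent.connectedComponentMk_eq_of_adj hadj]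
      · intro t _
        ext c
        simp only [P, mem_image, mem_filter, mem_univ, true_and]
        exact ⟨fun ⟨y, hy, hyc⟩ => hyc ▸ hy,
          fun hc => c.exists_rep.imp fun x hx => ⟨by rwa [hx], hx⟩⟩
      · intro W hW
        have hadj : ∀ x y, H.Adj x y → (x ∈ (W : Set V) ↔ y ∈ (W : Set V)) := fun x y h =>
          (mem_filter.1 hW).2 x y ((fromEdgeSet_adj _).1 h).1
        ext x
        simp only [P, mem_filter, mem_univ, true_and, mem_image]
        refine ⟨fun ⟨y, hy, hyx⟩ => ?_, fun hx => ⟨x, hx, rfl⟩⟩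
        exact mem_of_reachable_of_adj_iff hadj (ConnectedComponent.exact hyx) hy

lemma mem_edgesWithin {G : SimpleGraph V} [DecidableRel G.Adj] {W : Finset V} {e : Sym2 V} :
    e ∈ edgesWithin G W ↔ e ∈ G.edgeFinset ∧ ∀ x ∈ e, x ∈ W :=
  mem_filter

lemma disjoint_edgesWithin {G : SimpleGraph V} [DecidableRel G.Adj] {W W' : Finset V}
    (h : Disjoint W W') : Disjoint (edgesWithin G W) (edgesWithin G W') := by
  refine disjoint_left.2 fun e he he' => ?_
  induction e using Sym2.ind with
  | h x y =>
    exact disjoint_left.1 h ((mem_edgesWithin.1 he).2 x (Sym2.mem_mk_left x y))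
      ((mem_edgesWithin.1 he').2 x (Sym2.mem_mk_left x y))

lemma filter_powerset_noCrossingEdge (G : SimpleGraph V) [DecidableRel G.Adj] (W : Finset V) :
    {A ∈ (edgesWithin G univ).powerset | NoCrossingEdge A W}
      = (edgesWithin G W ∪ edgesWithin G (univ \ W)).powerset := by
  ext A
  rw [mem_filter, mem_powerset, mem_powerset]
  constructor
  · rintro ⟨hA, hW⟩ e he
    induction e using Sym2.ind with
    | h x y =>
      have hG := (mem_edgesWithin.1 (hA he)).1
      by_cases hx : x ∈ W <;> simp [mem_edgesWithin, hG, hx, (hW x y he).symm]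
  · intro hA
    refine ⟨fun e he => ?_, fun x y hxy => ?_⟩
    · rcases mem_union.1 (hA he) with h | h <;> simp [mem_edgesWithin.1 h, mem_edgesWithin]
    · rcases mem_union.1 (hA hxy) with h | h <;> simp_all [mem_edgesWithin]

lemma sum_noCrossingEdge_eq_Zmv_mul {R : Type*} [CommRing R] (G : SimpleGraph V)
    [DecidableRel G.Adj] (v : Sym2 V → R) (q1 q2 : R) (W : Finset V) :
    ∑ A ∈ (edgesWithin G univ).powerset with NoCrossingEdge A W,
        q1 ^ kcomp W A * q2 ^ kcomp (univ \ W) A * ∏ e ∈ A, v e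
      = Zmv G W q1 v * Zmv G (univ \ W) q2 v := by
  rw [filter_powerset_noCrossingEdge, sum_powerset_union_of_disjoint
    (disjoint_edgesWithin disjoint_sdiff), Zmv, Zmv, sum_mul_sum]
  refine sum_congr rfl fun A hA => sum_congr rfl fun B hB => ?_
  rw [mem_powerset] at hA hB
  have hB_out : ∀ e ∈ B, ∀ x ∈ e, x ∉ W := fun e he x hx =>
    (mem_sdiff.1 ((mem_edgesWithin.1 (hB he)).2 x hx)).2
  have hA_out : ∀ e ∈ A, ∀ x ∈ e, x ∉ univ \ W := fun e he x hx h =>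
    (mem_sdiff.1 h).2 ((mem_edgesWithin.1 (hA he)).2 x hx)
  rw [kcomp_union_of_forall_not_mem hB_out, union_comm, kcomp_union_of_forall_not_mem hA_out,
    union_comm, prod_union ((disjoint_edgesWithin disjoint_sdiff).mono hA hB)]
  ring

end Kcomp

theorem stmt12 {V : Type*} [Fintype V] [DecidableEq V] {R : Type*} [CommRing R]
    (G : SimpleGraph V) [DecidableRel G.Adj] (v : Sym2 V → R) (q1 q2 : R) :
    Zmv G Finset.univ (q1 + q2) v
      = ∑ W : Finset V, Zmv G W q1 v * Zmv G (Finset.univ \ W) q2 v := by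
  calc Zmv G univ (q1 + q2) v
      = ∑ A ∈ (edgesWithin G univ).powerset, ∑ W with NoCrossingEdge A W,
          q1 ^ kcomp W A * q2 ^ kcomp (univ \ W) A * ∏ e ∈ A, v e := by
        simp only [Zmv, add_pow_kcomp_univ, sum_mul]
    _ = ∑ W, ∑ A ∈ (edgesWithin G univ).powerset with NoCrossingEdge A W,
          q1 ^ kcomp W A * q2 ^ kcomp (univ \ W) A * ∏ e ∈ A, v e :=
        sum_comm' fun _ _ => by simp
    _ = _ := sum_congr rfl fun W _ => sum_noCrossingEdge_eq_Zmv_mul G v q1 q2 W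
end
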